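/- arXiv:2011.12614 — 10 statements merged into one kernel-verified Lean document; each statement's English description precedes it below -/
import Mathlib

section
/- Let K : ℝ^n∖{0} → [0,∞) be a measurable kernel with K(−x)=K(x) and ∫ min(1,|x|)K(x)dx < ∞. For every open set Ω ⊆ ℝ^n and all measurable sets A, B ⊆ ℝ^n, the K-perimeter is submodular: Per_K(A,Ω) + Per_K(B,Ω) ≥ Per_K(A∪B,Ω) + Per_K(A∩B,Ω), as an inequality in [0,∞]. -/
open MeasureTheory Set Filter Metric Topology
open scoped ENNReal Pointwise

noncomputable section

abbrev Euc (n : ℕ) := EuclideanSpace ℝ (Fin n)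

/-- Admissible kernel: measurable, nonnegative and even away from the origin,
with `∫ min(1,|x|) K(x) dx < ∞`. -/
def KernelOK {n : ℕ} (K : Euc n → ℝ) : Prop :=
  Measurable K ∧ (∀ x : Euc n, x ≠ 0 → 0 ≤ K x) ∧ (∀ x : Euc n, x ≠ 0 → K (-x) = K x) ∧
    (∫⁻ x : Euc n, ENNReal.ofReal (min 1 ‖x‖ * K x)) < ⊤

/-- The `K`-perimeter of `E` in `Ω`. -/
def perK {n : ℕ} (K : Euc n → ℝ) (E Ω : Set (Euc n)) : ℝ≥0∞ :=
  (∫⁻ x in E, ∫⁻ y in Ω \ E, ENNReal.ofReal (K (x - y))) +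
  (∫⁻ x in E ∩ Ω, ∫⁻ y in (Ω ∪ E)ᶜ, ENNReal.ofReal (K (x - y)))

/-- The (total) `K`-perimeter of `E`. -/
def perKtot {n : ℕ} (K : Euc n → ℝ) (E : Set (Euc n)) : ℝ≥0∞ :=
  ∫⁻ x in E, ∫⁻ y in Eᶜ, ENNReal.ofReal (K (x - y))

/-- `A` is compactly contained in `Ω`. -/
def CptIn {n : ℕ} (A Ω : Set (Euc n)) : Prop :=
  IsCompact (closure A) ∧ closure A ⊆ Ω

/-- `E` is `K`-outward minimizing in `Ω`. -/
def OutMin {n : ℕ} (K : Euc n → ℝ) (E Ω : Set (Euc n)) : Prop :=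
  ∀ F : Set (Euc n), MeasurableSet F → E ⊆ F → CptIn (F \ E) Ω →
    perK K E Ω ≤ perK K F Ω

/-- `E` is strongly `K`-outward minimizing in `Ω` with constant `δ`. -/
def StrongOutMin {n : ℕ} (K : Euc n → ℝ) (δ : ℝ) (E Ω : Set (Euc n)) : Prop :=
  ∀ F : Set (Euc n), MeasurableSet F → E ⊆ F → CptIn (F \ E) Ω →
    perK K E Ω + ENNReal.ofReal δ * volume (F \ E) ≤ perK K F Ω

end
noncomputable section
open MeasureTheory Set Filter Metric Topology
open scoped ENNReal Pointwise

/-- The truncated `K`-curvature of `G` at `x`, with truncation parameter `ε`: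
`∫_{ℝⁿ∖B(x,ε)} (χ_{Gᶜ}(y) − χ_G(y)) K(x−y) dy`. -/
def truncCurv {n : ℕ} (K : Euc n → ℝ) (G : Set (Euc n)) (x : Euc n) (ε : ℝ) : ℝ :=
  ∫ y in (Metric.ball x ε)ᶜ,
    ((Gᶜ).indicator (fun _ => (1:ℝ)) y - G.indicator (fun _ => (1:ℝ)) y) * K (x - y)

/-- `G` has compact boundary of class `C^{1,1}`: the boundary is compact, and `G` is the
sublevel set of a `C^1` function with Lipschitz gradient which is nondegenerate on the
boundary. -/
def HasCptC11Boundary {n : ℕ} (G : Set (Euc n)) : Prop :=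
  IsCompact (frontier G) ∧
  ∃ φ : Euc n → ℝ, ContDiff ℝ 1 φ ∧ (∃ L : NNReal, LipschitzWith L (fderiv ℝ φ)) ∧
    G = {x | φ x ≤ 0} ∧ frontier G = {x | φ x = 0} ∧
    ∀ x ∈ frontier G, fderiv ℝ φ x ≠ 0

/-- `H^K_A(x) ≥ c` in the viscosity sense: every set `G` with compact `C^{1,1}` boundary
with `G ⊆ A` and `x ∈ ∂G` has `K`-curvature at least `c` at `x` (the curvature being the
limit of the truncated curvatures). -/
def ViscCurvGE {n : ℕ} (K : Euc n → ℝ) (A : Set (Euc n)) (x : Euc n) (c : ℝ) : Prop :=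
  ∀ G : Set (Euc n), HasCptC11Boundary G → G ⊆ A → x ∈ frontier G →
    ∀ L : ℝ, Tendsto (truncCurv K G x) (𝓝[>] (0:ℝ)) (𝓝 L) → c ≤ L

/-- Signed distance function from `E` (positive inside). -/
def sgnDist {n : ℕ} (E : Set (Euc n)) (x : Euc n) : ℝ :=
  Metric.infDist x Eᶜ - Metric.infDist x E

/-- The Almgren–Taylor–Wang energy `Per_K(G) − (1/h)∫_G d_E`. -/
def atwEnergy {n : ℕ} (K : Euc n → ℝ) (E : Set (Euc n)) (h : ℝ) (G : Set (Euc n)) : ℝ :=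
  (perKtot K G).toReal - (1/h) * ∫ x in G, sgnDist E x

/-- `T` is an ATW minimizer for `E` at step `h`: it minimizes the ATW energy among all
measurable sets (competitors with infinite energy being irrelevant). -/
def ATWMin {n : ℕ} (K : Euc n → ℝ) (E : Set (Euc n)) (h : ℝ) (T : Set (Euc n)) : Prop :=
  MeasurableSet T ∧ perKtot K T < ⊤ ∧ IntegrableOn (sgnDist E) T ∧
  ∀ G : Set (Euc n), MeasurableSet G → perKtot K G < ⊤ → IntegrableOn (sgnDist E) G →
    atwEnergy K E h T ≤ atwEnergy K E h G

/-- The set of Lebesgue density-one points of `T`. -/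
def densityPts {n : ℕ} (T : Set (Euc n)) : Set (Euc n) :=
  {x | Tendsto (fun ρ : ℝ =>
      volume (T ∩ Metric.closedBall x ρ) / volume (Metric.closedBall x ρ))
    (𝓝[>] (0:ℝ)) (𝓝 1)}

/-- The nonlocal functional `J_K(v) = ½∬ |v(x)−v(y)| K(x−y) dx dy`. -/
def JK {n : ℕ} (K : Euc n → ℝ) (v : Euc n → ℝ) : ℝ≥0∞ :=
  (1/2 : ℝ≥0∞) * ∫⁻ x : Euc n, ∫⁻ y : Euc n,
    ENNReal.ofReal |v x - v y| * ENNReal.ofReal (K (x - y))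

end

open MeasureTheory Set Filter Metric Topology
open scoped ENNReal


section SubmodAux
open MeasureTheory Set
open scoped ENNReal

variable {n : ℕ}

/-- The pointwise integrand of `perK` written with indicator functions. -/
private noncomputable def Pfun (K : Euc n → ℝ) (Ω E : Set (Euc n)) (x y : Euc n) : ℝ≥0∞ :=
  E.indicator 1 x * (Ω \ E).indicator 1 y * ENNReal.ofReal (K (x - y)) +
  (E ∩ Ω).indicator 1 x * ((Ω ∪ E)ᶜ).indicator 1 y * ENNReal.ofReal (K (x - y))

private lemma term_meas {K : Euc n → ℝ} (hK : Measurable K) {S T : Set (Euc n)}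
    (hS : MeasurableSet S) (hT : MeasurableSet T) :
    Measurable (fun p : Euc n × Euc n =>
      S.indicator (1 : Euc n → ℝ≥0∞) p.1 * T.indicator (1 : Euc n → ℝ≥0∞) p.2 *
        ENNReal.ofReal (K (p.1 - p.2))) := by
  refine (Measurable.mul (Measurable.mul ?_ ?_) ?_)
  · exact (measurable_one.indicator hS).comp measurable_fst
  · exact (measurable_one.indicator hT).comp measurable_snd
  · exact ENNReal.measurable_ofReal.comp (hK.comp (measurable_fst.sub measurable_snd))

private lemma Pfun_meas {K : Euc n → ℝ} (hK : Measurable K) {Ω E : Set (Euc n)}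
    (hΩ : MeasurableSet Ω) (hE : MeasurableSet E) :
    Measurable (fun p : Euc n × Euc n => Pfun K Ω E p.1 p.2) :=
  (term_meas hK hE (hΩ.diff hE)).add (term_meas hK (hE.inter hΩ) (hΩ.union hE).compl)

private lemma setInt_eq {K : Euc n → ℝ} {S T : Set (Euc n)}
    (hS : MeasurableSet S) (hT : MeasurableSet T) :
    ∫⁻ x in S, ∫⁻ y in T, ENNReal.ofReal (K (x - y)) =
    ∫⁻ x, ∫⁻ y, S.indicator (1 : Euc n → ℝ≥0∞) x * T.indicator (1 : Euc n → ℝ≥0∞) y *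
      ENNReal.ofReal (K (x - y)) := by
  rw [← lintegral_indicator hS _]
  congr 1; ext x
  by_cases hx : x ∈ S
  · rw [indicator_of_mem hx, ← lintegral_indicator hT _]
    congr 1; ext y
    by_cases hy : y ∈ T <;> simp [hx, hy]
  · simp [hx]

private lemma perK_eq {K : Euc n → ℝ} (hK : Measurable K) {Ω E : Set (Euc n)}
    (hΩ : MeasurableSet Ω) (hE : MeasurableSet E) :
    perK K E Ω = ∫⁻ x, ∫⁻ y, Pfun K Ω E x y := by
  unfold perK Pfun
  rw [setInt_eq hE (hΩ.diff hE), setInt_eq (hE.inter hΩ) (hΩ.union hE).compl]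
  rw [← lintegral_add_left ((term_meas hK hE (hΩ.diff hE)).lintegral_prod_right')]
  congr 1; ext x
  have h1 : Measurable fun y => E.indicator (1 : Euc n → ℝ≥0∞) x *
      (Ω \ E).indicator (1 : Euc n → ℝ≥0∞) y * ENNReal.ofReal (K (x - y)) :=
    (term_meas hK hE (hΩ.diff hE)).comp measurable_prodMk_left
  exact (lintegral_add_left h1 _).symm

private lemma Pfun_sub {K : Euc n → ℝ} (Ω A B : Set (Euc n)) (x y : Euc n) :
    Pfun K Ω (A ∪ B) x y + Pfun K Ω (A ∩ B) x y ≤ Pfun K Ω A x y + Pfun K Ω B x y := by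
  unfold Pfun
  by_cases hxA : x ∈ A <;> by_cases hxB : x ∈ B <;> by_cases hyA : y ∈ A <;>
    by_cases hyB : y ∈ B <;> by_cases hxO : x ∈ Ω <;> by_cases hyO : y ∈ Ω <;>
    simp [indicator_apply, hxA, hxB, hyA, hyB, hxO, hyO, add_comm]

end SubmodAux

/-- submodularity of the `K`-perimeter. -/
theorem perK_submodular {n : ℕ} (K : Euc n → ℝ) (hK : KernelOK K)
    (Ω A B : Set (Euc n)) (hΩ : IsOpen Ω) (hA : MeasurableSet A) (hB : MeasurableSet B) :
    perK K (A ∪ B) Ω + perK K (A ∩ B) Ω ≤ perK K A Ω + perK K B Ω := by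
  obtain ⟨hKm, -, -, -⟩ := hK
  have hΩm := hΩ.measurableSet
  rw [perK_eq hKm hΩm (hA.union hB), perK_eq hKm hΩm (hA.inter hB),
      perK_eq hKm hΩm hA, perK_eq hKm hΩm hB]
  rw [← lintegral_add_left ((Pfun_meas hKm hΩm (hA.union hB)).lintegral_prod_right'),
      ← lintegral_add_left ((Pfun_meas hKm hΩm hA).lintegral_prod_right')]
  refine lintegral_mono fun x => ?_
  have h1 : Measurable fun y => Pfun K Ω (A ∪ B) x y :=
    (Pfun_meas hKm hΩm (hA.union hB)).comp measurable_prodMk_left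
  have h2 : Measurable fun y => Pfun K Ω A x y :=
    (Pfun_meas hKm hΩm hA).comp measurable_prodMk_left
  rw [← lintegral_add_left h1, ← lintegral_add_left h2]
  exact lintegral_mono fun y => Pfun_sub Ω A B x y
end

section
/- Let Ω ⊆ ℝ^n be open and E ⊆ ℝ^n measurable with Per_K(E,Ω) < ∞. Then E is K-outward minimizing in Ω if and only if for every measurable G ⊆ ℝ^n with G∖E compactly contained in Ω one has Per_K(E∩G,Ω) ≤ Per_K(G,Ω). -/
open MeasureTheory Set Filter Metric Topology
open scoped ENNReal Pointwise

open MeasureTheory Set Filter Metric Topology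
open scoped ENNReal

/-!
Writing `Per_K(A, Ω)` as the integral of `K(x - y)` over the pairs `(x, y) ∈ A × Aᶜ` with `x ∈ Ω` or
`y ∈ Ω` shows that `A ↦ Per_K(A, Ω)` is submodular, because pointwise
`1_{A∪B}(x) 1_{(A∪B)ᶜ}(y) + 1_{A∩B}(x) 1_{(A∩B)ᶜ}(y) ≤ 1_A(x) 1_{Aᶜ}(y) + 1_B(x) 1_{Bᶜ}(y)`.
If `E` is outward minimizing, testing it against `E ∪ G` and using
`Per_K(E ∪ G) + Per_K(E ∩ G) ≤ Per_K(E) + Per_K(G)` gives `Per_K(E ∩ G) ≤ Per_K(G)` once the finite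
`Per_K(E)` is cancelled; conversely, for `G ⊇ E` the inequality is outward minimality itself.
-/

theorem indicator_prod_compl_union_add_inter_le {α β : Type*} [AddCommMonoid β] [PartialOrder β]
    [CanonicallyOrderedAdd β] (w : α × α → β) (A B : Set α) (p : α × α) :
    ((A ∪ B) ×ˢ (A ∪ B)ᶜ).indicator w p + ((A ∩ B) ×ˢ (A ∩ B)ᶜ).indicator w p ≤
      (A ×ˢ Aᶜ).indicator w p + (B ×ˢ Bᶜ).indicator w p := by
  by_cases h1 : p.1 ∈ A <;> by_cases h2 : p.1 ∈ B <;> by_cases h3 : p.2 ∈ A <;>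
    by_cases h4 : p.2 ∈ B <;> simp [mem_prod, h1, h2, h3, h4]

section CutIntegral

variable {α : Type*} [MeasurableSpace α]

noncomputable def cutIntegral (μ : Measure α) (w : α × α → ℝ≥0∞) (A : Set α) : ℝ≥0∞ :=
  ∫⁻ x, ∫⁻ y, (A ×ˢ Aᶜ).indicator w (x, y) ∂μ ∂μ

theorem cutIntegral_union_add_inter_le (μ : Measure α) [SFinite μ] {w : α × α → ℝ≥0∞}
    (hw : Measurable w) {A : Set α} (hA : MeasurableSet A) (B : Set α) :
    cutIntegral μ w (A ∪ B) + cutIntegral μ w (A ∩ B) ≤ cutIntegral μ w A + cutIntegral μ w B := by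
  have hwA : Measurable ((A ×ˢ Aᶜ).indicator w) := hw.indicator (hA.prod hA.compl)
  calc cutIntegral μ w (A ∪ B) + cutIntegral μ w (A ∩ B)
      ≤ ∫⁻ x, (∫⁻ y, ((A ∪ B) ×ˢ (A ∪ B)ᶜ).indicator w (x, y) ∂μ) +
          ∫⁻ y, ((A ∩ B) ×ˢ (A ∩ B)ᶜ).indicator w (x, y) ∂μ ∂μ := le_lintegral_add _ _
    _ ≤ ∫⁻ x, (∫⁻ y, (A ×ˢ Aᶜ).indicator w (x, y) ∂μ) +
          ∫⁻ y, (B ×ˢ Bᶜ).indicator w (x, y) ∂μ ∂μ := by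
        refine lintegral_mono fun x => (le_lintegral_add _ _).trans ?_
        exact (lintegral_mono fun y => indicator_prod_compl_union_add_inter_le w A B (x, y)).trans_eq
          (lintegral_add_left (hwA.comp measurable_prodMk_left) _)
    _ = cutIntegral μ w A + cutIntegral μ w B := lintegral_add_left hwA.lintegral_prod_right' _

end CutIntegral

theorem setLIntegral_setLIntegral_eq_lintegral_indicator_prod {α β : Type*} [MeasurableSpace α]
    [MeasurableSpace β] {μ : Measure α} {ν : Measure β} {A : Set α} {B : Set β}
    (hA : MeasurableSet A) (hB : MeasurableSet B) (f : α → β → ℝ≥0∞) :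
    ∫⁻ x in A, ∫⁻ y in B, f x y ∂ν ∂μ =
      ∫⁻ x, ∫⁻ y, (A ×ˢ B).indicator (Function.uncurry f) (x, y) ∂ν ∂μ := by
  rw [← lintegral_indicator hA]
  refine lintegral_congr fun x => ?_
  by_cases hx : x ∈ A
  · rw [indicator_of_mem hx, ← lintegral_indicator hB]
    refine lintegral_congr fun y => ?_
    by_cases hy : y ∈ B <;> simp [hx, hy]
  · simp [hx]

section Perimeter

variable {n : ℕ}

theorem perK_eq_cutIntegral_add_cutIntegral (K : Euc n → ℝ) {A Ω : Set (Euc n)}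
    (hA : MeasurableSet A) (hΩ : MeasurableSet Ω) :
    perK K A Ω =
      cutIntegral volume ((univ ×ˢ Ω).indicator fun p => ENNReal.ofReal (K (p.1 - p.2))) A +
        cutIntegral volume ((Ω ×ˢ Ωᶜ).indicator fun p => ENNReal.ofReal (K (p.1 - p.2))) A := by
  rw [perK, setLIntegral_setLIntegral_eq_lintegral_indicator_prod hA (hΩ.diff hA),
    setLIntegral_setLIntegral_eq_lintegral_indicator_prod (hA.inter hΩ) (hΩ.union hA).compl]
  congr 1 <;> refine lintegral_congr fun x => lintegral_congr fun y => ?_ <;>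
    by_cases hxA : x ∈ A <;> by_cases hyA : y ∈ A <;> by_cases hxΩ : x ∈ Ω <;>
    by_cases hyΩ : y ∈ Ω <;> simp [hxA, hyA, hxΩ, hyΩ]

theorem perK_union_add_inter_le {K : Euc n → ℝ} (hK : Measurable K) {Ω A B : Set (Euc n)}
    (hΩ : MeasurableSet Ω) (hA : MeasurableSet A) (hB : MeasurableSet B) :
    perK K (A ∪ B) Ω + perK K (A ∩ B) Ω ≤ perK K A Ω + perK K B Ω := by
  have hk : Measurable fun p : Euc n × Euc n => ENNReal.ofReal (K (p.1 - p.2)) :=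
    ENNReal.measurable_ofReal.comp (hK.comp (measurable_fst.sub measurable_snd))
  simp only [perK_eq_cutIntegral_add_cutIntegral K (hA.union hB) hΩ,
    perK_eq_cutIntegral_add_cutIntegral K (hA.inter hB) hΩ,
    perK_eq_cutIntegral_add_cutIntegral K hA hΩ, perK_eq_cutIntegral_add_cutIntegral K hB hΩ]
  rw [add_add_add_comm, add_add_add_comm (cutIntegral _ _ A)]
  exact add_le_add
    (cutIntegral_union_add_inter_le volume (hk.indicator (MeasurableSet.univ.prod hΩ)) hA B)
    (cutIntegral_union_add_inter_le volume (hk.indicator (hΩ.prod hΩ.compl)) hA B)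

end Perimeter

/-- characterization of `K`-outward minimality via intersections. -/
theorem outMin_iff_inter {n : ℕ} (K : Euc n → ℝ) (hK : KernelOK K)
    (Ω E : Set (Euc n)) (hΩ : IsOpen Ω) (hE : MeasurableSet E)
    (hfin : perK K E Ω < ⊤) :
    OutMin K E Ω ↔
      ∀ G : Set (Euc n), MeasurableSet G → CptIn (G \ E) Ω →
        perK K (E ∩ G) Ω ≤ perK K G Ω := by
  constructor
  · intro hmin G hG hcpt
    have hE_le : perK K E Ω ≤ perK K (E ∪ G) Ω :=
      hmin (E ∪ G) (hE.union hG) subset_union_left (by rwa [union_sdiff_left])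
    refine (ENNReal.add_le_add_iff_left hfin.ne).1 ?_
    calc perK K E Ω + perK K (E ∩ G) Ω ≤ perK K (E ∪ G) Ω + perK K (E ∩ G) Ω := by gcongr
      _ ≤ perK K E Ω + perK K G Ω := perK_union_add_inter_le hK.1 hΩ.measurableSet hE hG
  · intro h F hF hEF hcpt
    simpa only [inter_eq_self_of_subset_left hEF] using h F hF hcpt
end

section
/- Let Ω ⊆ ℝ^n be open, δ > 0, and E ⊆ ℝ^n measurable with Per_K(E,Ω) < ∞. Then E is strongly K-outward minimizing in Ω with constant δ if and only if for every measurable G ⊆ ℝ^n with G∖E compactly contained in Ω one has Per_K(E∩G,Ω) ≤ Per_K(G,Ω) − δ·|G∖E|, where |·| is Lebesgue measure. -/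
open MeasureTheory Set Filter Metric Topology
open scoped ENNReal Pointwise

open MeasureTheory Set Filter Metric Topology
open scoped ENNReal

/-!
Write `Per_K(A, Ω) = ν(cut A)` with `ν` the measure of density `K(x - y)` on pairs and `cut A` the
pairs `(x, y)` with `x ∈ A`, `y ∉ A` and one of them in `Ω`. Pairs cut by `E ∩ G` or by `E ∪ G`
are cut by `E` or by `G`, and pairs cut by both `E ∩ G` and `E ∪ G` are cut by both `E` and `G`;
hence `Per_K` is submodular. Testing strong minimality with `F = E ∪ G` and cancelling the finite
`Per_K(E, Ω)` gives the intersection inequality; conversely `E ∩ F = E` when `E ⊆ F`.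
-/

section CutPairs

variable {α : Type*}

def cutPairs (Ω A : Set α) : Set (α × α) :=
  {p | p.1 ∈ A ∧ p.2 ∉ A ∧ (p.1 ∈ Ω ∨ p.2 ∈ Ω)}

theorem cutPairs_eq_union (Ω A : Set α) :
    cutPairs Ω A = A ×ˢ (Ω \ A) ∪ (A ∩ Ω) ×ˢ (Ω ∪ A)ᶜ := by
  ext ⟨x, y⟩
  simp only [cutPairs, mem_ofPred_eq, mem_union, mem_prod, Set.mem_sdiff, mem_inter_iff,
    mem_compl_iff]
  tauto

theorem disjoint_prod_diff_prod_compl_union (Ω A : Set α) :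
    Disjoint (A ×ˢ (Ω \ A)) ((A ∩ Ω) ×ˢ (Ω ∪ A)ᶜ) :=
  disjoint_prod.2 <| Or.inr <| disjoint_left.2 fun _ hy hy' => hy' (Or.inl hy.1)

theorem cutPairs_inter_union_cutPairs_union_subset (Ω E G : Set α) :
    cutPairs Ω (E ∩ G) ∪ cutPairs Ω (E ∪ G) ⊆ cutPairs Ω E ∪ cutPairs Ω G := by
  rintro ⟨x, y⟩
  simp only [cutPairs, mem_ofPred_eq, mem_union, mem_inter_iff]
  tauto

theorem cutPairs_inter_inter_cutPairs_union_subset (Ω E G : Set α) :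
    cutPairs Ω (E ∩ G) ∩ cutPairs Ω (E ∪ G) ⊆ cutPairs Ω E ∩ cutPairs Ω G := by
  rintro ⟨x, y⟩
  simp only [cutPairs, mem_ofPred_eq, mem_union, mem_inter_iff]
  tauto

variable [MeasurableSpace α]

theorem MeasurableSet.cutPairs {Ω A : Set α} (hΩ : MeasurableSet Ω) (hA : MeasurableSet A) :
    MeasurableSet (cutPairs Ω A) := by
  rw [cutPairs_eq_union]
  exact (hA.prod (hΩ.diff hA)).union ((hA.inter hΩ).prod (hΩ.union hA).compl)

theorem measure_cutPairs_inter_add_union_le (ν : Measure (α × α)) {Ω E G : Set α}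
    (hΩ : MeasurableSet Ω) (hE : MeasurableSet E) (hG : MeasurableSet G) :
    ν (cutPairs Ω (E ∩ G)) + ν (cutPairs Ω (E ∪ G)) ≤ ν (cutPairs Ω E) + ν (cutPairs Ω G) := by
  rw [← measure_union_add_inter _ (hΩ.cutPairs (hE.union hG)),
    ← measure_union_add_inter _ (hΩ.cutPairs hG)]
  exact add_le_add (measure_mono (cutPairs_inter_union_cutPairs_union_subset Ω E G))
    (measure_mono (cutPairs_inter_inter_cutPairs_union_subset Ω E G))

end CutPairs

theorem perK_eq_withDensity_cutPairs {n : ℕ} {K : Euc n → ℝ} (hK : Measurable K)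
    {Ω A : Set (Euc n)} (hΩ : MeasurableSet Ω) (hA : MeasurableSet A) :
    perK K A Ω =
      (volume : Measure (Euc n × Euc n)).withDensity (fun p => ENNReal.ofReal (K (p.1 - p.2)))
        (cutPairs Ω A) := by
  have hk : Measurable fun p : Euc n × Euc n => ENNReal.ofReal (K (p.1 - p.2)) := by fun_prop
  rw [withDensity_apply _ (hΩ.cutPairs hA), cutPairs_eq_union,
    lintegral_union ((hA.inter hΩ).prod (hΩ.union hA).compl)
      (disjoint_prod_diff_prod_compl_union Ω A),
    Measure.volume_eq_prod, setLIntegral_prod _ hk.aemeasurable,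
    setLIntegral_prod _ hk.aemeasurable, perK]

theorem perK_inter_add_perK_union_le {n : ℕ} {K : Euc n → ℝ} (hK : Measurable K)
    {Ω E G : Set (Euc n)} (hΩ : MeasurableSet Ω) (hE : MeasurableSet E) (hG : MeasurableSet G) :
    perK K (E ∩ G) Ω + perK K (E ∪ G) Ω ≤ perK K E Ω + perK K G Ω := by
  simp only [perK_eq_withDensity_cutPairs hK hΩ, hE, hG, hE.inter hG, hE.union hG]
  exact measure_cutPairs_inter_add_union_le _ hΩ hE hG

theorem strongOutMin_iff_inter_general {n : ℕ} (K : Euc n → ℝ) (hK : KernelOK K)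
    (Ω E : Set (Euc n)) (δ : ℝ) (hΩ : IsOpen Ω) (hE : MeasurableSet E)
    (hfin : perK K E Ω < ⊤) :
    StrongOutMin K δ E Ω ↔
      ∀ G : Set (Euc n), MeasurableSet G → CptIn (G \ E) Ω →
        perK K (E ∩ G) Ω + ENNReal.ofReal δ * volume (G \ E) ≤ perK K G Ω := by
  refine ⟨fun hmin G hG hcpt => ?_, fun hinter F hF hEF hcpt => ?_⟩
  · have hunion := hmin (E ∪ G) (hE.union hG) subset_union_left (by rwa [union_sdiff_left])
    rw [union_sdiff_left] at hunion
    refine (ENNReal.add_le_add_iff_right hfin.ne).1 ?_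
    calc perK K (E ∩ G) Ω + ENNReal.ofReal δ * volume (G \ E) + perK K E Ω
        = perK K (E ∩ G) Ω + (perK K E Ω + ENNReal.ofReal δ * volume (G \ E)) := by ring
      _ ≤ perK K (E ∩ G) Ω + perK K (E ∪ G) Ω := by gcongr
      _ ≤ perK K E Ω + perK K G Ω := perK_inter_add_perK_union_le hK.1 hΩ.measurableSet hE hG
      _ = perK K G Ω + perK K E Ω := add_comm _ _
  · simpa only [inter_eq_left.2 hEF] using hinter F hF hcpt

/-- characterization of strong `K`-outward minimality via intersections. -/
theorem strongOutMin_iff_inter {n : ℕ} (K : Euc n → ℝ) (hK : KernelOK K)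
    (Ω E : Set (Euc n)) (δ : ℝ) (hδ : 0 < δ) (hΩ : IsOpen Ω) (hE : MeasurableSet E)
    (hfin : perK K E Ω < ⊤) :
    StrongOutMin K δ E Ω ↔
      ∀ G : Set (Euc n), MeasurableSet G → CptIn (G \ E) Ω →
        perK K (E ∩ G) Ω + ENNReal.ofReal δ * volume (G \ E) ≤ perK K G Ω :=
  strongOutMin_iff_inter_general K hK Ω E δ hΩ hE hfin
end

section
/- Let Ω ⊆ ℝ^n be open and E ⊆ ℝ^n measurable with Per_K(E,Ω) < ∞. Then E is K-outward minimizing in Ω if and only if for every measurable A ⊆ Ω∖E compactly contained in Ω one has ∫_A ∫_E K(x−y) dy dx ≤ ∫_A ∫_{ℝ^n∖(A∪E)} K(x−y) dy dx. -/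
open MeasureTheory Set Filter Metric Topology
open scoped ENNReal Pointwise

open MeasureTheory Set Filter Metric Topology
open scoped ENNReal

/-!
Adding to `E` a set `A ⊆ Ω ∖ E` changes the `K`-perimeter in `Ω` by exchanging interactions:
the interaction of `A` with `E` is lost and that of `A` with `(E ∪ A)ᶜ` is gained, i.e.
`Per_K(E ∪ A, Ω) + L(A, E) = Per_K(E, Ω) + L(A, (E ∪ A)ᶜ)` (this uses that `K` is even).
Since `L(A, E) ≤ L(E, Ω ∖ E) ≤ Per_K(E, Ω) < ∞`, the two sides can be cancelled, so
`Per_K(E, Ω) ≤ Per_K(E ∪ A, Ω)` exactly when `L(A, E) ≤ L(A, (E ∪ A)ᶜ)`; every admissible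
competitor `F` is `E ∪ A` with `A = F ∖ E`.
-/

noncomputable section

namespace KPerimeter

variable {n : ℕ} (K : Euc n → ℝ)

def interaction (X Y : Set (Euc n)) : ℝ≥0∞ :=
  ∫⁻ x in X, ∫⁻ y in Y, ENNReal.ofReal (K (x - y))

theorem perK_eq_interaction (E Ω : Set (Euc n)) :
    perK K E Ω = interaction K E (Ω \ E) + interaction K (E ∩ Ω) (Ω ∪ E)ᶜ :=
  rfl

theorem interaction_mono_right (X : Set (Euc n)) {Y Z : Set (Euc n)} (h : Y ⊆ Z) :
    interaction K X Y ≤ interaction K X Z :=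
  lintegral_mono fun _ => lintegral_mono' (Measure.restrict_mono h le_rfl) le_rfl

theorem interaction_union_left {X Y : Set (Euc n)} (h : Disjoint X Y) (hY : MeasurableSet Y)
    (Z : Set (Euc n)) :
    interaction K (X ∪ Y) Z = interaction K X Z + interaction K Y Z :=
  lintegral_union hY h

variable {K} (hK : Measurable K)
include hK

theorem measurable_ofReal_kernel :
    Measurable fun p : Euc n × Euc n => ENNReal.ofReal (K (p.1 - p.2)) :=
  (hK.comp (measurable_fst.sub measurable_snd)).ennreal_ofReal

theorem interaction_union_right (X : Set (Euc n)) {Y Z : Set (Euc n)} (h : Disjoint Y Z)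
    (hZ : MeasurableSet Z) :
    interaction K X (Y ∪ Z) = interaction K X Y + interaction K X Z := by
  unfold interaction
  simp_rw [lintegral_union hZ h]
  exact lintegral_add_left (measurable_ofReal_kernel hK).lintegral_prod_right _

theorem interaction_comm (hK_even : ∀ x : Euc n, x ≠ 0 → K (-x) = K x) (X Y : Set (Euc n)) :
    interaction K X Y = interaction K Y X := by
  have hK_sub : ∀ a b : Euc n, K (a - b) = K (b - a) := fun a b => by
    rcases eq_or_ne (b - a) 0 with hba | hba
    · rw [hba, ← neg_sub, hba, neg_zero]
    · rw [← hK_even _ hba, neg_sub]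
  unfold interaction
  rw [lintegral_lintegral_swap (measurable_ofReal_kernel hK).aemeasurable]
  simp_rw [hK_sub]

theorem perK_union_add_interaction (hK_even : ∀ x : Euc n, x ≠ 0 → K (-x) = K x)
    {Ω E A : Set (Euc n)} (hΩ : MeasurableSet Ω) (hE : MeasurableSet E)
    (hA : MeasurableSet A) (hAΩ : A ⊆ Ω \ E) :
    perK K (E ∪ A) Ω + interaction K A E = perK K E Ω + interaction K A (E ∪ A)ᶜ := by
  have hAE : Disjoint E A := disjoint_right.mpr fun _ hx => (hAΩ hx).2
  have hΩ_diff : Ω \ E = Ω \ (E ∪ A) ∪ A := by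
    ext x; have := @hAΩ x; simp only [Set.mem_sdiff, mem_union] at this ⊢; tauto
  have hinter : (E ∪ A) ∩ Ω = E ∩ Ω ∪ A := by
    ext x; have := @hAΩ x; simp only [Set.mem_sdiff, mem_inter_iff, mem_union] at this ⊢; tauto
  have hext : (Ω ∪ (E ∪ A))ᶜ = (Ω ∪ E)ᶜ := by
    ext x; have := @hAΩ x; simp only [Set.mem_sdiff, mem_compl_iff, mem_union] at this ⊢; tauto
  have hcompl : (E ∪ A)ᶜ = Ω \ (E ∪ A) ∪ (Ω ∪ E)ᶜ := by
    ext x; have := @hAΩ x; simp only [Set.mem_sdiff, mem_compl_iff, mem_union] at this ⊢; tauto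
  have hd₁ : Disjoint (Ω \ (E ∪ A)) A := disjoint_left.mpr fun _ hx hxA => hx.2 (Or.inr hxA)
  have hd₂ : Disjoint (E ∩ Ω) A := hAE.mono_left inter_subset_left
  have hd₃ : Disjoint (Ω \ (E ∪ A)) (Ω ∪ E)ᶜ :=
    disjoint_left.mpr fun _ hx hx' => hx' (Or.inl hx.1)
  rw [perK_eq_interaction, perK_eq_interaction, hext, hinter, hΩ_diff,
    interaction_union_left K hAE hA, interaction_union_left K hd₂ hA,
    interaction_union_right hK E hd₁ hA, hcompl,
    interaction_union_right hK A hd₃ (hΩ.union hE).compl, interaction_comm hK hK_even A E]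
  ring

theorem interaction_lt_top_of_perK_lt_top (hK_even : ∀ x : Euc n, x ≠ 0 → K (-x) = K x)
    {Ω E A : Set (Euc n)} (hAΩ : A ⊆ Ω \ E) (hfin : perK K E Ω < ⊤) :
    interaction K A E < ⊤ := by
  calc interaction K A E = interaction K E A := interaction_comm hK hK_even A E
    _ ≤ interaction K E (Ω \ E) := interaction_mono_right K E hAΩ
    _ ≤ perK K E Ω := le_self_add
    _ < ⊤ := hfin

theorem perK_le_perK_union_iff (hK_even : ∀ x : Euc n, x ≠ 0 → K (-x) = K x)
    {Ω E A : Set (Euc n)} (hΩ : MeasurableSet Ω) (hE : MeasurableSet E)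
    (hA : MeasurableSet A) (hAΩ : A ⊆ Ω \ E) (hfin : perK K E Ω < ⊤) :
    perK K E Ω ≤ perK K (E ∪ A) Ω ↔ interaction K A E ≤ interaction K A (E ∪ A)ᶜ := by
  have key := perK_union_add_interaction hK hK_even hΩ hE hA hAΩ
  have hAE := interaction_lt_top_of_perK_lt_top hK hK_even hAΩ hfin
  constructor
  · intro hle
    refine (ENNReal.add_le_add_iff_left hfin.ne).mp ?_
    calc perK K E Ω + interaction K A E ≤ perK K (E ∪ A) Ω + interaction K A E := by gcongr
      _ = perK K E Ω + interaction K A (E ∪ A)ᶜ := key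
  · intro hle
    refine (ENNReal.add_le_add_iff_right hAE.ne).mp ?_
    calc perK K E Ω + interaction K A E ≤ perK K E Ω + interaction K A (E ∪ A)ᶜ := by gcongr
      _ = perK K (E ∪ A) Ω + interaction K A E := key.symm

end KPerimeter

end

open KPerimeter

/-- characterization of `K`-outward minimality via exterior sets. -/
theorem outMin_iff_ext {n : ℕ} (K : Euc n → ℝ) (hK : KernelOK K)
    (Ω E : Set (Euc n)) (hΩ : IsOpen Ω) (hE : MeasurableSet E)
    (hfin : perK K E Ω < ⊤) :
    OutMin K E Ω ↔
      ∀ A : Set (Euc n), MeasurableSet A → A ⊆ Ω \ E → CptIn A Ω →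
        (∫⁻ x in A, ∫⁻ y in E, ENNReal.ofReal (K (x - y))) ≤
          ∫⁻ x in A, ∫⁻ y in (A ∪ E)ᶜ, ENNReal.ofReal (K (x - y)) := by
  obtain ⟨hKm, -, hK_even, -⟩ := hK
  have hiff {A} (hA : MeasurableSet A) (hAΩ : A ⊆ Ω \ E) :=
    perK_le_perK_union_iff hKm hK_even hΩ.measurableSet hE hA hAΩ hfin
  constructor
  · intro hmin A hA hAΩ hcpt
    have hdiff : (E ∪ A) \ E = A :=
      union_sdiff_left.trans (disjoint_left.mpr fun _ hx => (hAΩ hx).2).sdiff_eq_left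
    rw [union_comm A E]
    exact (hiff hA hAΩ).mp (hmin _ (hE.union hA) subset_union_left (by rwa [hdiff]))
  · intro hext F hF hEF hcpt
    have hAΩ : F \ E ⊆ Ω \ E := fun x hx => ⟨hcpt.2 (subset_closure hx), hx.2⟩
    have hiff' := hiff (hF.diff hE) hAΩ
    have hint := hext _ (hF.diff hE) hAΩ hcpt
    rw [union_sdiff_cancel hEF] at hiff'
    rw [sdiff_union_of_subset hEF] at hint
    exact hiff'.mpr hint
end

section
/- Let Ω ⊆ ℝ^n be open and let (E_m) be a sequence of measurable sets, each K-outward minimizing in Ω and with Per_K(E_m,Ω) < ∞, such that χ_{E_m} → χ_E in L¹(ℝ^n) for some measurable set E with Per_K(E,Ω) < ∞. Then E is K-outward minimizing in Ω. -/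
open MeasureTheory Set Filter Metric Topology
open scoped ENNReal Pointwise

open MeasureTheory Set Filter Metric Topology
open scoped ENNReal
/-!
Write `L(A, B) = ∫_A ∫_B K(x - y) dy dx`. For `D` disjoint from `E` and `D ⊆ Ω`, splitting the
sets in the definition of `Per_K` gives `Per_K(E ∪ D, Ω) + L(E, D) = Per_K(E, Ω) + L(D, (E ∪ D)ᶜ)`,
so when `Per_K(E, Ω) < ∞`, `E` is outward minimizing in `Ω` iff `L(E, D) ≤ L(D, (E ∪ D)ᶜ)` for all
such `D ⋐ Ω`. Testing the inequality for `E m` with `D \ E m` and comparing sets gives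
`L(E₀, D) ≤ L(D, (E₀ ∪ D)ᶜ) + L(D ∩ E m, E₀) + 2 L(E₀ \ E m, D)`, and the error terms tend to zero
by absolute continuity of the integral, since `L(E₀, D) ≤ Per_K(E₀, Ω) < ∞` and
`|D ∩ E m| + |E₀ \ E m| ≤ |E m ∆ E₀| → 0`.
-/

namespace KPerimeter

variable {n : ℕ} {K : Euc n → ℝ}

variable (K) in
noncomputable def interK (A B : Set (Euc n)) : ℝ≥0∞ :=
  ∫⁻ x in A, ∫⁻ y in B, ENNReal.ofReal (K (x - y))

theorem perK_eq_interK (E Ω : Set (Euc n)) :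
    perK K E Ω = interK K E (Ω \ E) + interK K (E ∩ Ω) (Ω ∪ E)ᶜ := rfl

theorem interK_mono {A A' B B' : Set (Euc n)} (hA : A ⊆ A') (hB : B ⊆ B') :
    interK K A B ≤ interK K A' B' :=
  (lintegral_mono_set hA).trans (lintegral_mono fun _ => lintegral_mono_set hB)

theorem interK_union_left_le (A A' B : Set (Euc n)) :
    interK K (A ∪ A') B ≤ interK K A B + interK K A' B :=
  lintegral_union_le _ _ _

theorem measurable_lintegral_kernel (hK : Measurable K) (B : Set (Euc n)) :
    Measurable fun x => ∫⁻ y in B, ENNReal.ofReal (K (x - y)) :=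
  Measurable.lintegral_prod_right (f := fun x y => ENNReal.ofReal (K (x - y)))
    (hK.comp (measurable_fst.sub measurable_snd)).ennreal_ofReal

theorem interK_union_right_le (hK : Measurable K) (A B B' : Set (Euc n)) :
    interK K A (B ∪ B') ≤ interK K A B + interK K A B' :=
  (lintegral_mono fun _ => lintegral_union_le _ _ _).trans_eq
    (lintegral_add_left (measurable_lintegral_kernel hK B) _)

theorem interK_union_left {A A' : Set (Euc n)} (hA' : MeasurableSet A')
    (hd : Disjoint A A') (B : Set (Euc n)) :
    interK K (A ∪ A') B = interK K A B + interK K A' B :=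
  lintegral_union hA' hd

theorem interK_union_right (hK : Measurable K) (A : Set (Euc n)) {B B' : Set (Euc n)}
    (hB' : MeasurableSet B') (hd : Disjoint B B') :
    interK K A (B ∪ B') = interK K A B + interK K A B' := by
  simp only [interK, lintegral_union hB' hd]
  exact lintegral_add_left (measurable_lintegral_kernel hK B) _

theorem interK_comm (hK : Measurable K) (hev : ∀ x : Euc n, x ≠ 0 → K (-x) = K x)
    (A B : Set (Euc n)) : interK K A B = interK K B A := by
  have hKsymm (x y : Euc n) : K (x - y) = K (y - x) := by
    rcases eq_or_ne x y with rfl | hxy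
    · rfl
    · rw [← neg_sub, hev _ (sub_ne_zero.2 hxy.symm)]
  unfold interK
  rw [lintegral_lintegral_swap
    ((hK.comp (measurable_fst.sub measurable_snd)).ennreal_ofReal.aemeasurable)]
  simp_rw [hKsymm]

theorem perK_union_add_interK (hK : Measurable K) {E D Ω : Set (Euc n)}
    (hE : MeasurableSet E) (hD : MeasurableSet D) (hΩ : MeasurableSet Ω)
    (hED : Disjoint E D) (hDΩ : D ⊆ Ω) :
    perK K (E ∪ D) Ω + interK K E D = perK K E Ω + interK K D (E ∪ D)ᶜ := by
  have hDE : ∀ x, x ∈ D → x ∉ E := fun x hx hxE => hED.notMem_of_mem_left hxE hx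
  have h₁ : Ω \ E = Ω \ (E ∪ D) ∪ D := by
    ext x; have := hDΩ (a := x); have := hDE x; simp only [mem_union, Set.mem_sdiff]; tauto
  have h₂ : (E ∪ D) ∩ Ω = E ∩ Ω ∪ D := by
    ext x; have := hDΩ (a := x); simp only [mem_union, mem_inter_iff]; tauto
  have h₃ : Ω ∪ (E ∪ D) = Ω ∪ E := by
    ext x; have := hDΩ (a := x); simp only [mem_union]; tauto
  have h₄ : (E ∪ D)ᶜ = Ω \ (E ∪ D) ∪ (Ω ∪ E)ᶜ := by
    ext x; have := hDΩ (a := x); simp only [mem_union, Set.mem_sdiff, mem_compl_iff]; tauto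
  rw [perK_eq_interK, perK_eq_interK, h₁, h₂, h₃, h₄,
    interK_union_left hD hED, interK_union_left hD (hED.mono_left inter_subset_left),
    interK_union_right hK _ hD (disjoint_sdiff_left.mono_right subset_union_right),
    interK_union_right hK _ (hΩ.union hE).compl
      (disjoint_compl_right.mono_left (sdiff_subset.trans subset_union_left))]
  ring

theorem interK_le_perK {E Ω D : Set (Euc n)} (hD : D ⊆ Ω \ E) : interK K E D ≤ perK K E Ω :=
  (interK_mono subset_rfl hD).trans le_self_add

theorem outMin_iff_interK_le (hK : Measurable K) {E Ω : Set (Euc n)} (hE : MeasurableSet E)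
    (hΩ : MeasurableSet Ω) (hfin : perK K E Ω < ⊤) :
    OutMin K E Ω ↔ ∀ D, MeasurableSet D → Disjoint E D → CptIn D Ω →
      interK K E D ≤ interK K D (E ∪ D)ᶜ := by
  constructor
  · intro hmin D hD hED hDΩ
    have hFE : (E ∪ D) \ E = D := by rw [union_sdiff_left, hED.symm.sdiff_eq_left]
    have hper := hmin (E ∪ D) (hE.union hD) subset_union_left (by rwa [hFE])
    have hid := perK_union_add_interK hK hE hD hΩ hED (subset_closure.trans hDΩ.2)
    refine (ENNReal.add_le_add_iff_left hfin.ne).1 ?_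
    rw [← hid]
    gcongr
  · intro h F hF hEF hcpt
    have hD : F \ E ⊆ Ω := subset_closure.trans hcpt.2
    have hED : Disjoint E (F \ E) := disjoint_sdiff_right
    have hid := perK_union_add_interK hK hE (hF.diff hE) hΩ hED hD
    rw [union_sdiff_cancel hEF] at hid
    have hfinED : interK K E (F \ E) ≠ ⊤ :=
      (interK_le_perK fun _ hx => ⟨hD hx, hx.2⟩).trans_lt hfin |>.ne
    refine (ENNReal.add_le_add_iff_right hfinED).1 ?_
    rw [hid]
    gcongr
    simpa [union_sdiff_cancel hEF] using h _ (hF.diff hE) hED hcpt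

theorem interK_le_of_outMin (hK : Measurable K) (hev : ∀ x : Euc n, x ≠ 0 → K (-x) = K x)
    {E' E₀ D Ω : Set (Euc n)} (hE' : MeasurableSet E') (hΩ : MeasurableSet Ω)
    (hmin : OutMin K E' Ω) (hfin : perK K E' Ω < ⊤) (hD : MeasurableSet D) (hDΩ : CptIn D Ω) :
    interK K E₀ D ≤ interK K D (E₀ ∪ D)ᶜ +
      (interK K (D ∩ E') E₀ + interK K (E₀ \ E') D + interK K (E₀ \ E') D) := by
  have hD' : CptIn (D \ E') Ω :=
    ⟨hDΩ.1.of_isClosed_subset isClosed_closure (closure_mono sdiff_subset),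
      (closure_mono sdiff_subset).trans hDΩ.2⟩
  have hkey := (outMin_iff_interK_le hK hE' hΩ hfin).1 hmin (D \ E') (hD.diff hE')
    disjoint_sdiff_right hD'
  rw [union_sdiff_self] at hkey
  have hcompl : (E' ∪ D)ᶜ ⊆ (E₀ ∪ D)ᶜ ∪ E₀ \ E' := by
    intro x; simp only [mem_union, mem_compl_iff, Set.mem_sdiff]; tauto
  calc interK K E₀ D
      ≤ interK K E₀ (D \ E') + interK K E₀ (D ∩ E') :=
        (interK_mono subset_rfl (sdiff_union_inter D E').ge).trans
          (interK_union_right_le hK _ _ _)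
    _ ≤ interK K (E' ∪ E₀ \ E') (D \ E') + interK K (D ∩ E') E₀ := by
        rw [interK_comm hK hev E₀ (D ∩ E')]
        gcongr
        exact interK_mono (by simp) subset_rfl
    _ ≤ interK K E' (D \ E') + interK K (E₀ \ E') D + interK K (D ∩ E') E₀ := by
        gcongr
        exact (interK_union_left_le _ _ _).trans
          (by gcongr; exact interK_mono subset_rfl sdiff_subset)
    _ ≤ interK K (D \ E') ((E₀ ∪ D)ᶜ ∪ E₀ \ E') + interK K (E₀ \ E') D +
          interK K (D ∩ E') E₀ := by
        gcongr
        exact hkey.trans (interK_mono subset_rfl hcompl)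
    _ ≤ interK K D (E₀ ∪ D)ᶜ + interK K (E₀ \ E') D + interK K (E₀ \ E') D +
          interK K (D ∩ E') E₀ := by
        gcongr
        rw [← interK_comm hK hev D (E₀ \ E')]
        exact (interK_mono sdiff_subset subset_rfl).trans (interK_union_right_le hK _ _ _)
    _ = _ := by ring

theorem tendsto_interK_zero {ι : Type*} {l : Filter ι} {A B : Set (Euc n)}
    {S : ι → Set (Euc n)} (hAB : interK K A B ≠ ⊤) (hS : ∀ i, S i ⊆ A)
    (hvol : Tendsto (volume ∘ S) l (𝓝 0)) :
    Tendsto (fun i => interK K (S i) B) l (𝓝 0) := by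
  have hvolA : Tendsto (volume.restrict A ∘ S) l (𝓝 0) :=
    tendsto_of_tendsto_of_tendsto_of_le_of_le tendsto_const_nhds hvol (fun _ => zero_le)
      fun i => Measure.restrict_apply_le _ _
  refine (tendsto_setLIntegral_zero hAB hvolA).congr fun i => ?_
  rw [Measure.restrict_restrict_of_subset (hS i)]
  rfl

end KPerimeter

open KPerimeter in
/-- stability of `K`-outward minimality under `L¹` convergence. -/
theorem outMin_L1_stable {n : ℕ} (K : Euc n → ℝ) (hK : KernelOK K)
    (Ω : Set (Euc n)) (hΩ : IsOpen Ω) (E : ℕ → Set (Euc n)) (E₀ : Set (Euc n))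
    (hEm : ∀ m, MeasurableSet (E m)) (hE₀ : MeasurableSet E₀)
    (hmin : ∀ m, OutMin K (E m) Ω) (hfin : ∀ m, perK K (E m) Ω < ⊤)
    (hfin₀ : perK K E₀ Ω < ⊤)
    (hconv : Tendsto (fun m => volume ((E m \ E₀) ∪ (E₀ \ E m))) atTop (𝓝 0)) :
    OutMin K E₀ Ω := by
  obtain ⟨hKm, -, hev, -⟩ := hK
  rw [outMin_iff_interK_le hKm hE₀ hΩ.measurableSet hfin₀]
  intro D hD hE₀D hDΩ
  have hfinE₀D : interK K E₀ D ≠ ⊤ := by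
    refine ((interK_le_perK fun x hx => ⟨?_, ?_⟩).trans_lt hfin₀).ne
    exacts [subset_closure.trans hDΩ.2 hx, hE₀D.notMem_of_mem_right hx]
  have hvol {S : ℕ → Set (Euc n)} (hS : ∀ m, S m ⊆ (E m \ E₀) ∪ (E₀ \ E m)) :
      Tendsto (volume ∘ S) atTop (𝓝 0) :=
    tendsto_of_tendsto_of_tendsto_of_le_of_le tendsto_const_nhds hconv (fun _ => zero_le)
      fun m => measure_mono (hS m)
  have h₁ : Tendsto (fun m => interK K (D ∩ E m) E₀) atTop (𝓝 0) :=
    tendsto_interK_zero (interK_comm hKm hev E₀ D ▸ hfinE₀D) (fun _ => inter_subset_left)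
      (hvol fun m x hx => Or.inl ⟨hx.2, hE₀D.notMem_of_mem_right hx.1⟩)
  have h₂ : Tendsto (fun m => interK K (E₀ \ E m) D) atTop (𝓝 0) :=
    tendsto_interK_zero hfinE₀D (fun _ => sdiff_subset) (hvol fun _ => subset_union_right)
  refine ge_of_tendsto (by simpa using tendsto_const_nhds.add ((h₁.add h₂).add h₂))
    (Eventually.of_forall fun m => interK_le_of_outMin hKm hev (hEm m) hΩ.measurableSet
      (hmin m) (hfin m) hD hDΩ)
end

section
/- Let Ω ⊆ ℝ^n be open, δ > 0, and let (E_m) be a sequence of measurable sets, each strongly K-outward minimizing in Ω with constant δ and with Per_K(E_m,Ω) < ∞, such that χ_{E_m} → χ_E in L¹(ℝ^n) for some measurable set E with Per_K(E,Ω) < ∞. Then E is strongly K-outward minimizing in Ω with the same constant δ. -/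
open MeasureTheory Set Filter Metric Topology
open scoped ENNReal Pointwise

open MeasureTheory Set Filter Metric Topology
open scoped ENNReal

/-! Let `ν = interactionMeasure K Ω`, so that `ν (A ×ˢ B)` is the `K`-interaction of `A` and `B`
counted over the pairs with at least one point in `Ω`, and `Per_K(E, Ω) = ν (E ×ˢ Eᶜ)`.
Inclusion–exclusion on the four pieces `E ∖ W`, `W ∖ E`, `E ∩ W`, `(E ∪ W)ᶜ` gives
`Per(E ∪ W) + Per(E ∩ W) + ν((E∖W) × (W∖E)) + ν((W∖E) × (E∖W)) = Per(E) + Per(W)`.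
Testing the minimality of `E m` against `E m ∪ W`, with `W = F ∖ E₀`, therefore yields
`δ |W ∖ E m| + 2 ν((E m ∖ W) × (W ∖ E m)) ≤ Per(W)`. As `ν(E₀ × W) ≤ Per(E₀) < ∞`, the measure
`ν` restricted to `E₀ × W` is absolutely continuous in each factor, so `m → ∞` gives
`δ |W| + 2 ν(E₀ × W) ≤ Per(W)`, which is the minimality inequality for `F = E₀ ∪ W`. -/

section
variable {α β : Type*} [MeasurableSpace α] [MeasurableSpace β]

theorem measure_union_prod_compl_add_inter_prod_compl (ν : Measure (α × α)) {A B : Set α}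
    (hA : MeasurableSet A) (hB : MeasurableSet B) :
    ν ((A ∪ B) ×ˢ (A ∪ B)ᶜ) + ν ((A ∩ B) ×ˢ (A ∩ B)ᶜ) + ν ((A \ B) ×ˢ (B \ A))
      + ν ((B \ A) ×ˢ (A \ B)) = ν (A ×ˢ Aᶜ) + ν (B ×ˢ Bᶜ) := by
  have hind : ∀ p : α × α,
      ((A ∪ B) ×ˢ (A ∪ B)ᶜ).indicator 1 p + ((A ∩ B) ×ˢ (A ∩ B)ᶜ).indicator 1 p
        + ((A \ B) ×ˢ (B \ A)).indicator 1 p + ((B \ A) ×ˢ (A \ B)).indicator 1 p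
        = (A ×ˢ Aᶜ).indicator (1 : α × α → ℝ≥0∞) p + (B ×ˢ Bᶜ).indicator 1 p := by
    rintro ⟨x, y⟩
    by_cases hxA : x ∈ A <;> by_cases hxB : x ∈ B <;> by_cases hyA : y ∈ A <;>
      by_cases hyB : y ∈ B <;> simp [hxA, hxB, hyA, hyB]
  have hU := (hA.union hB).prod (hA.union hB).compl
  have hI := (hA.inter hB).prod (hA.inter hB).compl
  have hAB := (hA.diff hB).prod (hB.diff hA)
  have hBA := (hB.diff hA).prod (hA.diff hB)
  have hA' := hA.prod hA.compl
  have hB' := hB.prod hB.compl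
  calc _ = ∫⁻ p, ((A ∪ B) ×ˢ (A ∪ B)ᶜ).indicator 1 p + ((A ∩ B) ×ˢ (A ∩ B)ᶜ).indicator 1 p
        + ((A \ B) ×ˢ (B \ A)).indicator 1 p + ((B \ A) ×ˢ (A \ B)).indicator 1 p ∂ν := by
        rw [lintegral_add_left (by fun_prop (disch := assumption)),
          lintegral_add_left (by fun_prop (disch := assumption)),
          lintegral_add_left (by fun_prop (disch := assumption)), lintegral_indicator_one hU,
          lintegral_indicator_one hI, lintegral_indicator_one hAB, lintegral_indicator_one hBA]
    _ = ∫⁻ p, (A ×ˢ Aᶜ).indicator 1 p + (B ×ˢ Bᶜ).indicator 1 p ∂ν := lintegral_congr hind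
    _ = _ := by
        rw [lintegral_add_left (by fun_prop (disch := assumption)), lintegral_indicator_one hA',
          lintegral_indicator_one hB']

theorem measure_prod_le_add_sdiff (ν : Measure (α × β)) (A A' : Set α) (B B' : Set β) :
    ν (A ×ˢ B) ≤ ν (A' ×ˢ B') + ν ((A \ A') ×ˢ B) + ν (A ×ˢ (B \ B')) := by
  refine (measure_mono ?_).trans
    ((measure_union_le _ _).trans (add_le_add (measure_union_le _ _) le_rfl))
  rintro ⟨x, y⟩ ⟨hx, hy⟩
  by_cases hx' : x ∈ A' <;> by_cases hy' : y ∈ B' <;> simp [*]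

variable {μ : Measure α} [SFinite μ]

theorem withDensity_prod_apply_prod_comm {w : α × α → ℝ≥0∞} (hw : ∀ p, w p.swap = w p)
    (A B : Set α) : (μ.prod μ).withDensity w (A ×ˢ B) = (μ.prod μ).withDensity w (B ×ˢ A) := by
  rw [withDensity_apply', withDensity_apply',
    ← Measure.measurePreserving_swap.setLIntegral_comp_preimage_emb
      MeasurableEquiv.prodComm.measurableEmbedding, preimage_swap_prod]
  simp_rw [hw]

variable {μ' : Measure β} [SFinite μ']

theorem tendsto_withDensity_prod_zero {w : α × β → ℝ≥0∞} (hw : Measurable w) {A : Set α}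
    {B : Set β} (hfin : (μ.prod μ').withDensity w (A ×ˢ B) ≠ ∞) {ι : Type*} {l : Filter ι}
    {s : ι → Set α} (hsA : ∀ i, s i ⊆ A) (hs : Tendsto (μ ∘ s) l (𝓝 0)) :
    Tendsto (fun i => (μ.prod μ').withDensity w (s i ×ˢ B)) l (𝓝 0) := by
  have hrect : ∀ C : Set α, (μ.prod μ').withDensity w (C ×ˢ B)
      = ∫⁻ x in C, ∫⁻ y in B, w (x, y) ∂μ' ∂μ := fun C => by
    rw [withDensity_apply', setLIntegral_prod _ hw.aemeasurable]
  simp_rw [hrect] at hfin ⊢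
  have := tendsto_setLIntegral_zero (μ := μ.restrict A) hfin (l := l) (s := s)
    (tendsto_of_tendsto_of_tendsto_of_le_of_le tendsto_const_nhds hs (fun _ => zero_le)
      fun i => Measure.restrict_apply_le _ _)
  simpa only [Measure.restrict_restrict_of_subset (hsA _)] using this

end

namespace KPerimeter

variable {n : ℕ}

noncomputable def kernelWeight (K : Euc n → ℝ) (Ω : Set (Euc n)) : Euc n × Euc n → ℝ≥0∞ :=
  {p | p.1 ∈ Ω ∨ p.2 ∈ Ω}.indicator fun p => ENNReal.ofReal (K (p.1 - p.2))

noncomputable def interactionMeasure (K : Euc n → ℝ) (Ω : Set (Euc n)) :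
    Measure (Euc n × Euc n) :=
  ((volume : Measure (Euc n)).prod volume).withDensity (kernelWeight K Ω)

variable {K : Euc n → ℝ} {Ω : Set (Euc n)}

theorem measurable_kernelWeight (hK : Measurable K) (hΩ : MeasurableSet Ω) :
    Measurable (kernelWeight K Ω) :=
  (hK.comp (measurable_fst.sub measurable_snd)).ennreal_ofReal.indicator
    ((measurable_fst hΩ).union (measurable_snd hΩ))

theorem kernelWeight_of_mem_or {x y : Euc n} (h : x ∈ Ω ∨ y ∈ Ω) :
    kernelWeight K Ω (x, y) = ENNReal.ofReal (K (x - y)) :=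
  indicator_of_mem (s := {p : Euc n × Euc n | p.1 ∈ Ω ∨ p.2 ∈ Ω}) h _

theorem kernelWeight_of_notMem {x y : Euc n} (hx : x ∉ Ω) (hy : y ∉ Ω) :
    kernelWeight K Ω (x, y) = 0 :=
  indicator_of_notMem (s := {p : Euc n × Euc n | p.1 ∈ Ω ∨ p.2 ∈ Ω}) (fun h => h.elim hx hy) _

theorem kernelWeight_swap (hsym : ∀ x : Euc n, x ≠ 0 → K (-x) = K x) (p : Euc n × Euc n) :
    kernelWeight K Ω p.swap = kernelWeight K Ω p := by
  obtain ⟨x, y⟩ := p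
  have hyx : K (y - x) = K (x - y) := by
    rcases eq_or_ne x y with rfl | hxy
    · rfl
    · rw [← neg_sub, hsym _ (sub_ne_zero.2 hxy)]
  classical
  simp only [kernelWeight, indicator_apply, mem_ofPred_eq, Prod.swap_prod_mk, hyx, or_comm]

theorem interactionMeasure_prod_comm (hsym : ∀ x : Euc n, x ≠ 0 → K (-x) = K x)
    (A B : Set (Euc n)) : interactionMeasure K Ω (A ×ˢ B) = interactionMeasure K Ω (B ×ˢ A) :=
  withDensity_prod_apply_prod_comm (kernelWeight_swap hsym) A B

theorem perK_eq_interactionMeasure (hK : Measurable K) (hΩ : MeasurableSet Ω) {E : Set (Euc n)}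
    (hE : MeasurableSet E) : perK K E Ω = interactionMeasure K Ω (E ×ˢ Eᶜ) := by
  have hk : Measurable fun x => ∫⁻ y in Ω \ E, ENNReal.ofReal (K (x - y)) :=
    Measurable.lintegral_prod_right (hK.comp (measurable_fst.sub measurable_snd)).ennreal_ofReal
  rw [perK, interactionMeasure, withDensity_apply',
    setLIntegral_prod _ (measurable_kernelWeight hK hΩ).aemeasurable, inter_comm,
    ← setLIntegral_indicator hΩ, ← lintegral_add_left hk]
  refine (setLIntegral_congr_fun hE fun x _ => ?_).symm
  have hsplit : Eᶜ = (Ω \ E) ∪ (Ω ∪ E)ᶜ := by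
    ext; simp only [mem_compl_iff, mem_union, Set.mem_sdiff]; tauto
  have hdisj : Disjoint (Ω \ E) (Ω ∪ E)ᶜ :=
    disjoint_compl_right.mono_left (sdiff_subset.trans subset_union_left)
  rw [hsplit, lintegral_union (hΩ.union hE).compl hdisj]
  congr 1
  · exact setLIntegral_congr_fun (hΩ.diff hE) fun y hy => kernelWeight_of_mem_or (Or.inr hy.1)
  · by_cases hx : x ∈ Ω
    · rw [indicator_of_mem hx]
      exact setLIntegral_congr_fun (hΩ.union hE).compl fun y _ =>
        kernelWeight_of_mem_or (Or.inl hx)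
    · rw [indicator_of_notMem hx]
      refine (setLIntegral_congr_fun (hΩ.union hE).compl fun y hy => ?_).trans lintegral_zero
      exact kernelWeight_of_notMem hx fun hy' => hy (Or.inl hy')

theorem perK_union_add_perK_inter (hK : Measurable K) (hΩ : MeasurableSet Ω) {E F : Set (Euc n)}
    (hE : MeasurableSet E) (hF : MeasurableSet F) :
    perK K (E ∪ F) Ω + perK K (E ∩ F) Ω + interactionMeasure K Ω ((E \ F) ×ˢ (F \ E))
      + interactionMeasure K Ω ((F \ E) ×ˢ (E \ F)) = perK K E Ω + perK K F Ω := by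
  simp only [perK_eq_interactionMeasure hK hΩ, hE, hF, hE.union hF, hE.inter hF]
  exact measure_union_prod_compl_add_inter_prod_compl _ hE hF

theorem perK_union_add_two_mul_interaction (hK : Measurable K)
    (hsym : ∀ x : Euc n, x ≠ 0 → K (-x) = K x) (hΩ : MeasurableSet Ω) {E F : Set (Euc n)}
    (hE : MeasurableSet E) (hF : MeasurableSet F) (hEF : Disjoint E F) :
    perK K (E ∪ F) Ω + 2 * interactionMeasure K Ω (E ×ˢ F) = perK K E Ω + perK K F Ω := by
  have h := perK_union_add_perK_inter hK hΩ hE hF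
  rwa [hEF.inter_eq, hEF.sdiff_eq_left, hEF.symm.sdiff_eq_left,
    interactionMeasure_prod_comm hsym F, perK_eq_interactionMeasure hK hΩ MeasurableSet.empty,
    empty_prod, measure_empty, add_zero, add_assoc, ← two_mul] at h

theorem StrongOutMin.add_two_mul_interaction_le {δ : ℝ} {E W : Set (Euc n)}
    (hmin : StrongOutMin K δ E Ω) (hfin : perK K E Ω ≠ ⊤) (hK : Measurable K)
    (hsym : ∀ x : Euc n, x ≠ 0 → K (-x) = K x) (hΩ : MeasurableSet Ω) (hE : MeasurableSet E)
    (hW : MeasurableSet W) (hWΩ : CptIn W Ω) :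
    ENNReal.ofReal δ * volume (W \ E) + 2 * interactionMeasure K Ω ((E \ W) ×ˢ (W \ E))
      ≤ perK K W Ω := by
  have hcpt : CptIn ((E ∪ W) \ E) Ω := by
    rw [union_sdiff_left]
    exact ⟨hWΩ.1.of_isClosed_subset isClosed_closure (closure_mono sdiff_subset),
      (closure_mono sdiff_subset).trans hWΩ.2⟩
  have hEW := hmin (E ∪ W) (hE.union hW) subset_union_left hcpt
  rw [union_sdiff_left] at hEW
  have hid := perK_union_add_perK_inter hK hΩ hE hW
  rw [interactionMeasure_prod_comm hsym (W \ E)] at hid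
  refine (ENNReal.add_le_add_iff_left hfin).1 ?_
  calc perK K E Ω + (ENNReal.ofReal δ * volume (W \ E)
          + 2 * interactionMeasure K Ω ((E \ W) ×ˢ (W \ E)))
      ≤ perK K (E ∪ W) Ω + 2 * interactionMeasure K Ω ((E \ W) ×ˢ (W \ E)) := by
        rw [← add_assoc]; gcongr
    _ ≤ perK K (E ∪ W) Ω + perK K (E ∩ W) Ω + interactionMeasure K Ω ((E \ W) ×ˢ (W \ E))
          + interactionMeasure K Ω ((E \ W) ×ˢ (W \ E)) := by
        rw [two_mul, ← add_assoc]; gcongr; exact le_self_add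
    _ = perK K E Ω + perK K W Ω := hid

theorem interactionMeasure_le_add_of_disjoint (hsym : ∀ x : Euc n, x ≠ 0 → K (-x) = K x)
    {E₀ W : Set (Euc n)} (hE₀W : Disjoint E₀ W) (A : Set (Euc n)) :
    interactionMeasure K Ω (E₀ ×ˢ W) ≤ interactionMeasure K Ω ((A \ W) ×ˢ (W \ A))
      + (interactionMeasure K Ω ((E₀ \ A) ×ˢ W) + interactionMeasure K Ω ((W ∩ A) ×ˢ E₀)) := by
  calc interactionMeasure K Ω (E₀ ×ˢ W)
      ≤ interactionMeasure K Ω ((E₀ ∩ A) ×ˢ (W \ A))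
        + interactionMeasure K Ω ((E₀ \ (E₀ ∩ A)) ×ˢ W)
        + interactionMeasure K Ω (E₀ ×ˢ (W \ (W \ A))) := measure_prod_le_add_sdiff _ _ _ _ _
    _ ≤ _ := by
      rw [sdiff_self_inter, sdiff_sdiff_right_self, interactionMeasure_prod_comm hsym E₀, add_assoc]
      gcongr
      exact fun x hx => ⟨hx.2, hE₀W.notMem_of_mem_left hx.1⟩

theorem add_two_mul_interaction_le_of_tendsto (hK : Measurable K)
    (hsym : ∀ x : Euc n, x ≠ 0 → K (-x) = K x) (hΩ : MeasurableSet Ω) {δ : ℝ}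
    {E : ℕ → Set (Euc n)} {E₀ W : Set (Euc n)} (hE₀W : Disjoint E₀ W)
    (hfin : interactionMeasure K Ω (E₀ ×ˢ W) ≠ ⊤)
    (hconv : Tendsto (fun m => volume ((E m \ E₀) ∪ (E₀ \ E m))) atTop (𝓝 0)) {P : ℝ≥0∞}
    (hP : ∀ m, ENNReal.ofReal δ * volume (W \ E m)
      + 2 * interactionMeasure K Ω ((E m \ W) ×ˢ (W \ E m)) ≤ P) :
    ENNReal.ofReal δ * volume W + 2 * interactionMeasure K Ω (E₀ ×ˢ W) ≤ P := by
  set ν := interactionMeasure K Ω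
  set η := fun m => volume ((E m \ E₀) ∪ (E₀ \ E m))
  set err := fun m => ν ((E₀ \ E m) ×ˢ W) + ν ((W ∩ E m) ×ˢ E₀)
  have hvol_tendsto : ∀ s : ℕ → Set (Euc n), (∀ m, s m ⊆ (E m \ E₀) ∪ (E₀ \ E m)) →
      Tendsto (volume ∘ s) atTop (𝓝 0) := fun s hs =>
    tendsto_of_tendsto_of_tendsto_of_le_of_le tendsto_const_nhds hconv (fun _ => zero_le)
      fun m => measure_mono (hs m)
  have hvol : ∀ m, volume W ≤ volume (W \ E m) + η m := fun m => by
    refine (measure_mono fun x hx => ?_).trans (measure_union_le _ _)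
    by_cases hxE : x ∈ E m
    · exact Or.inr (Or.inl ⟨hxE, hE₀W.notMem_of_mem_right hx⟩)
    · exact Or.inl ⟨hx, hxE⟩
  have herr : Tendsto err atTop (𝓝 0) := by
    have hfin' : ν (W ×ˢ E₀) ≠ ⊤ := by rwa [interactionMeasure_prod_comm hsym]
    have h := (tendsto_withDensity_prod_zero (measurable_kernelWeight hK hΩ) hfin
      (fun _ => sdiff_subset) (hvol_tendsto _ fun m => subset_union_right)).add
      (tendsto_withDensity_prod_zero (measurable_kernelWeight hK hΩ) hfin'
      (fun _ => inter_subset_left)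
      (hvol_tendsto _ fun m x hx => Or.inl ⟨hx.2, hE₀W.notMem_of_mem_right hx.1⟩))
    rw [zero_add] at h
    exact h
  have hlim : Tendsto (fun m => P + (ENNReal.ofReal δ * η m + 2 * err m)) atTop (𝓝 P) := by
    simpa using tendsto_const_nhds.add
      ((ENNReal.Tendsto.const_mul hconv (Or.inr ENNReal.ofReal_ne_top)).add
        (ENNReal.Tendsto.const_mul herr (Or.inr ENNReal.ofNat_ne_top)))
  refine ge_of_tendsto' hlim fun m => ?_
  calc ENNReal.ofReal δ * volume W + 2 * ν (E₀ ×ˢ W)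
      ≤ ENNReal.ofReal δ * (volume (W \ E m) + η m)
        + 2 * (ν ((E m \ W) ×ˢ (W \ E m)) + err m) := by
          gcongr
          exacts [hvol m, interactionMeasure_le_add_of_disjoint hsym hE₀W (E m)]
    _ = (ENNReal.ofReal δ * volume (W \ E m) + 2 * ν ((E m \ W) ×ˢ (W \ E m)))
        + (ENNReal.ofReal δ * η m + 2 * err m) := by ring
    _ ≤ P + (ENNReal.ofReal δ * η m + 2 * err m) := by gcongr; exact hP m

end KPerimeter

open KPerimeter in
theorem strongOutMin_L1_stable_general {n : ℕ} (K : Euc n → ℝ) (hK : KernelOK K)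
    (Ω : Set (Euc n)) (δ : ℝ) (hΩ : IsOpen Ω)
    (E : ℕ → Set (Euc n)) (E₀ : Set (Euc n))
    (hEm : ∀ m, MeasurableSet (E m)) (hE₀ : MeasurableSet E₀)
    (hmin : ∀ m, StrongOutMin K δ (E m) Ω) (hfin : ∀ m, perK K (E m) Ω < ⊤)
    (hfin₀ : perK K E₀ Ω < ⊤)
    (hconv : Tendsto (fun m => volume ((E m \ E₀) ∪ (E₀ \ E m))) atTop (𝓝 0)) :
    StrongOutMin K δ E₀ Ω := by
  obtain ⟨hKm, -, hsym, -⟩ := hK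
  have hΩm := hΩ.measurableSet
  intro F hF hE₀F hcpt
  set W := F \ E₀
  have hW : MeasurableSet W := hF.diff hE₀
  have hfinW : interactionMeasure K Ω (E₀ ×ˢ W) ≠ ⊤ := by
    have hWc : W ⊆ E₀ᶜ := fun x hx => hx.2
    refine ne_top_of_le_ne_top ?_ (measure_mono (prod_mono subset_rfl hWc))
    rw [← perK_eq_interactionMeasure hKm hΩm hE₀]
    exact hfin₀.ne
  have hW_le : ENNReal.ofReal δ * volume W + 2 * interactionMeasure K Ω (E₀ ×ˢ W) ≤ perK K W Ω :=
    add_two_mul_interaction_le_of_tendsto hKm hsym hΩm disjoint_sdiff_right hfinW hconv fun m =>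
      (hmin m).add_two_mul_interaction_le (hfin m).ne hKm hsym hΩm (hEm m) hW hcpt
  have hsplit := perK_union_add_two_mul_interaction hKm hsym hΩm hE₀ hW disjoint_sdiff_right
  rw [union_sdiff_cancel hE₀F] at hsplit
  have hfin2 : 2 * interactionMeasure K Ω (E₀ ×ˢ W) ≠ ⊤ := ENNReal.mul_ne_top (by norm_num) hfinW
  refine (ENNReal.add_le_add_iff_right hfin2).1 ?_
  calc perK K E₀ Ω + ENNReal.ofReal δ * volume W + 2 * interactionMeasure K Ω (E₀ ×ˢ W)
      ≤ perK K E₀ Ω + perK K W Ω := by rw [add_assoc]; gcongr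
    _ = perK K F Ω + 2 * interactionMeasure K Ω (E₀ ×ˢ W) := hsplit.symm

/-- stability of strong `K`-outward minimality under `L¹` convergence. -/
theorem strongOutMin_L1_stable {n : ℕ} (K : Euc n → ℝ) (hK : KernelOK K)
    (Ω : Set (Euc n)) (δ : ℝ) (hδ : 0 < δ) (hΩ : IsOpen Ω)
    (E : ℕ → Set (Euc n)) (E₀ : Set (Euc n))
    (hEm : ∀ m, MeasurableSet (E m)) (hE₀ : MeasurableSet E₀)
    (hmin : ∀ m, StrongOutMin K δ (E m) Ω) (hfin : ∀ m, perK K (E m) Ω < ⊤)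
    (hfin₀ : perK K E₀ Ω < ⊤)
    (hconv : Tendsto (fun m => volume ((E m \ E₀) ∪ (E₀ \ E m))) atTop (𝓝 0)) :
    StrongOutMin K δ E₀ Ω :=
  strongOutMin_L1_stable_general K hK Ω δ hΩ E E₀ hEm hE₀ hmin hfin hfin₀ hconv
end

section
/- Let Ω ⊆ ℝ^n be open and let (E_m) be measurable sets with χ_{E_m} → χ_E in L¹(ℝ^n) for a measurable set E. Then the K-perimeter in Ω is lower semicontinuous: Per_K(E,Ω) ≤ liminf_{m→∞} Per_K(E_m,Ω). -/
open MeasureTheory Set Filter Metric Topology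
open scoped ENNReal Pointwise

open MeasureTheory Set Filter Metric Topology
open scoped ENNReal

/-- lower semicontinuity of the `K`-perimeter under `L¹` convergence. -/
theorem perK_lowerSemicontinuous {n : ℕ} (K : Euc n → ℝ) (hK : KernelOK K)
    (Ω : Set (Euc n)) (hΩ : IsOpen Ω) (E : ℕ → Set (Euc n)) (E₀ : Set (Euc n))
    (hEm : ∀ m, MeasurableSet (E m)) (hE₀ : MeasurableSet E₀)
    (hconv : Tendsto (fun m => volume ((E m \ E₀) ∪ (E₀ \ E m))) atTop (𝓝 0)) :
    perK K E₀ Ω ≤ Filter.liminf (fun m => perK K (E m) Ω) atTop := by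
  classical
  set k : Euc n × Euc n → ℝ≥0∞ := fun p => ENNReal.ofReal (K (p.1 - p.2)) with hkdef
  have hkmeas : Measurable k :=
    ENNReal.measurable_ofReal.comp (hK.1.comp (measurable_fst.sub measurable_snd))
  set g : Set (Euc n) → Euc n × Euc n → ℝ≥0∞ := fun S p =>
    (S ×ˢ (Ω \ S)).indicator k p + ((S ∩ Ω) ×ˢ (Ω ∪ S)ᶜ).indicator k p with hgdef
  have hgmeas : ∀ S : Set (Euc n), MeasurableSet S → Measurable (g S) := by
    intro S hS
    exact (hkmeas.indicator (hS.prod (hΩ.measurableSet.diff hS))).add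
      (hkmeas.indicator ((hS.inter hΩ.measurableSet).prod
        (hΩ.measurableSet.union hS).compl))
  have key : ∀ S T : Set (Euc n), MeasurableSet S → MeasurableSet T →
      (∫⁻ x in S, ∫⁻ y in T, ENNReal.ofReal (K (x - y))) =
      ∫⁻ p, (S ×ˢ T).indicator k p ∂((volume : Measure (Euc n)).prod volume) := by
    intro S T hS hT
    rw [lintegral_indicator (hS.prod hT) k, ← Measure.prod_restrict,
      lintegral_prod _ hkmeas.aemeasurable]
  have hper : ∀ S : Set (Euc n), MeasurableSet S →
      perK K S Ω = ∫⁻ p, g S p ∂((volume : Measure (Euc n)).prod volume) := by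
    intro S hS
    rw [perK, key S (Ω \ S) hS (hΩ.measurableSet.diff hS),
      key (S ∩ Ω) (Ω ∪ S)ᶜ (hS.inter hΩ.measurableSet) (hΩ.measurableSet.union hS).compl,
      ← lintegral_add_left (hkmeas.indicator (hS.prod (hΩ.measurableSet.diff hS)))]
  by_contra hcon
  push_neg at hcon
  obtain ⟨c, hc1, hc2⟩ := exists_between hcon
  have hfreq : ∃ᶠ m in atTop, perK K (E m) Ω < c := frequently_lt_of_liminf_lt (by isBoundedDefault) hc1
  obtain ⟨φ, hφmono, hφ⟩ := Filter.extraction_of_frequently_atTop hfreq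
  have hconv' : Tendsto (fun m => volume ((E (φ m) \ E₀) ∪ (E₀ \ E (φ m)))) atTop (𝓝 0) :=
    hconv.comp hφmono.tendsto_atTop
  obtain ⟨ρ, hρmono, hρ⟩ := Filter.extraction_forall_of_eventually'
    (P := fun i m => volume ((E (φ m) \ E₀) ∪ (E₀ \ E (φ m))) < (2⁻¹ : ℝ≥0∞) ^ i)
    (fun i => Filter.eventually_atTop.1
      (hconv'.eventually_lt_const (ENNReal.pow_pos (ENNReal.inv_pos.2 ENNReal.ofNat_ne_top) i)))
  set ψ : ℕ → ℕ := φ ∘ ρ with hψdef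
  set D : ℕ → Set (Euc n) := fun m => (E (ψ m) \ E₀) ∪ (E₀ \ E (ψ m)) with hDdef
  have hsum : (∑' m, volume (D m)) ≠ ∞ := by
    refine ne_top_of_le_ne_top ?_ (ENNReal.tsum_le_tsum fun m => (hρ m).le)
    rw [ENNReal.tsum_geometric, ENNReal.one_sub_inv_two]
    simp
  have hae : ∀ᵐ x : Euc n, ∀ᶠ m in atTop, x ∉ D m := ae_eventually_notMem hsum
  -- lift to the product
  obtain ⟨N, hNsub, hNmeas, hN0⟩ :=
    exists_measurable_superset_of_null (ae_iff.1 hae)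
  have haeprod : ∀ᵐ p ∂((volume : Measure (Euc n)).prod volume),
      (∀ᶠ m in atTop, p.1 ∉ D m) ∧ (∀ᶠ m in atTop, p.2 ∉ D m) := by
    rw [ae_iff]
    have hz : ((volume : Measure (Euc n)).prod volume) (N ×ˢ univ ∪ univ ×ˢ N) = 0 := by
      refine measure_union_null ?_ ?_ <;> rw [Measure.prod_prod] <;> simp [hN0]
    refine measure_mono_null (fun p hp => ?_) hz
    simp only [mem_setOf_eq, not_and_or] at hp
    rcases hp with hp | hp
    · exact Or.inl ⟨hNsub hp, mem_univ _⟩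
    · exact Or.inr ⟨mem_univ _, hNsub hp⟩
  have haelim : ∀ᵐ p ∂((volume : Measure (Euc n)).prod volume),
      g E₀ p = Filter.liminf (fun m => g (E (ψ m)) p) atTop := by
    filter_upwards [haeprod] with p hp
    have hev : ∀ᶠ m in atTop, g (E (ψ m)) p = g E₀ p := by
      filter_upwards [hp.1, hp.2] with m h1 h2
      have e1 : p.1 ∈ E (ψ m) ↔ p.1 ∈ E₀ := by
        simp only [hDdef, mem_union, mem_diff, not_or, not_and, not_not] at h1
        exact ⟨fun h => h1.1 h, fun h => h1.2 h⟩
      have e2 : p.2 ∈ E (ψ m) ↔ p.2 ∈ E₀ := by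
        simp only [hDdef, mem_union, mem_diff, not_or, not_and, not_not] at h2
        exact ⟨fun h => h2.1 h, fun h => h2.2 h⟩
      have m1 : p ∈ (E (ψ m)) ×ˢ (Ω \ E (ψ m)) ↔ p ∈ E₀ ×ˢ (Ω \ E₀) := by
        simp only [mem_prod, mem_diff, e1, e2]
      have m2 : p ∈ (E (ψ m) ∩ Ω) ×ˢ (Ω ∪ E (ψ m))ᶜ ↔ p ∈ (E₀ ∩ Ω) ×ˢ (Ω ∪ E₀)ᶜ := by
        simp only [mem_prod, mem_inter_iff, mem_compl_iff, mem_union, e1, e2]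
      simp only [hgdef]
      rw [indicator_apply, indicator_apply, indicator_apply, indicator_apply,
        if_congr m1 rfl rfl, if_congr m2 rfl rfl]
    rw [Filter.liminf_congr hev, Filter.liminf_const]
  have hmain : perK K E₀ Ω ≤ c := by
    calc perK K E₀ Ω = ∫⁻ p, g E₀ p ∂((volume : Measure (Euc n)).prod volume) :=
          hper E₀ hE₀
      _ = ∫⁻ p, Filter.liminf (fun m => g (E (ψ m)) p) atTop
            ∂((volume : Measure (Euc n)).prod volume) := lintegral_congr_ae haelim
      _ ≤ Filter.liminf (fun m => ∫⁻ p, g (E (ψ m)) p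
            ∂((volume : Measure (Euc n)).prod volume)) atTop :=
          lintegral_liminf_le (fun m => hgmeas _ (hEm (ψ m)))
      _ = Filter.liminf (fun m => perK K (E (ψ m)) Ω) atTop := by
          simp_rw [fun m => (hper (E (ψ m)) (hEm (ψ m))).symm]
      _ ≤ c := by
          refine Filter.liminf_le_of_frequently_le ?_
          exact Filter.Frequently.of_forall (fun m => (hφ (ρ m)).le)
  exact absurd hmain (not_le.2 hc2)
end

section
/- For every unit vector ν ∈ ℝ^n and every R > 0, the closed half-space H = {x ∈ ℝ^n : x·ν ≥ 0} is K-outward minimizing in the open ball B(0,R): Per_K(H,B(0,R)) ≤ Per_K(F,B(0,R)) for every measurable F ⊇ H with F∖H compactly contained in B(0,R). -/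
open MeasureTheory Set Filter Metric Topology
open scoped ENNReal Pointwise

/-!
Write `L(X, Y) = ∫_X ∫_Y K(x - y) dy dx`, `H = {x·ν ≥ 0}` and `A = F \ H ⊆ Ω \ H`. Splitting both
perimeters, `Per_K(H, Ω)` and `Per_K(F, Ω)` share all terms except `L(H, A) = L(A, H)` and
`L(A, Hᶜ \ A)` respectively, so it suffices that `L(A, A) + L(A, H) ≤ L(A, Hᶜ)` with `L(A, A)`
finite. Finiteness is obtained by truncating `K` near `0`; monotone convergence removes the
truncation because `A × H` stays away from the diagonal.

The measure `K(x - y) dx dy` on pairs is invariant under `(x, y) ↦ (y, x)` and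
`(x, y) ↦ (x, 2x - y)`. The swap maps the pairs of `A × A` with `y·ν < x·ν` into the slab
`x·ν < y·ν < 0`, the reflection maps the remaining pairs of `A × A` into `2x·ν < y·ν ≤ x·ν` and
`A × H` onto `y·ν ≤ 2x·ν`; these three slabs are disjoint pieces of `A × Hᶜ`.
-/

open MeasureTheory Set Filter Metric Topology
open scoped ENNReal RealInnerProductSpace

section Reflection

variable {E : Type*} [AddCommGroup E] [MeasurableSpace E]

def reflectSnd (q : E × E) : E × E := (q.1, q.1 + q.1 - q.2)

theorem measure_prod_self_add_measure_prod_le {ρ : Measure (E × E)}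
    (hswap : MeasurePreserving Prod.swap ρ ρ) (hrefl : MeasurePreserving reflectSnd ρ ρ)
    {φ : E →+ ℝ} (hφ : Measurable φ) {A : Set E} (hA : MeasurableSet A)
    (hAφ : ∀ x ∈ A, φ x < 0) :
    ρ (A ×ˢ A) + ρ (A ×ˢ {y | 0 ≤ φ y}) ≤ ρ (A ×ˢ {y | 0 ≤ φ y}ᶜ) := by
  have hφ₁ : Measurable fun q : E × E => φ q.1 := hφ.comp measurable_fst
  have hφ₂ : Measurable fun q : E × E => φ q.2 := hφ.comp measurable_snd
  have hA₁ : MeasurableSet {q : E × E | q.1 ∈ A} := measurable_fst hA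
  set pairs := A ×ˢ A
  set halfspace := {y | 0 ≤ φ y}
  let lowSlab := {q : E × E | q.1 ∈ A ∧ φ q.1 < φ q.2 ∧ φ q.2 < 0}
  let midSlab := {q : E × E | q.1 ∈ A ∧ 2 * φ q.1 < φ q.2 ∧ φ q.2 ≤ φ q.1}
  let farSlab := {q : E × E | q.1 ∈ A ∧ φ q.2 ≤ 2 * φ q.1}
  have hmid : MeasurableSet midSlab := hA₁.inter ((measurableSet_lt (hφ₁.const_mul 2) hφ₂).inter
    (measurableSet_le hφ₂ hφ₁))
  have hfar : MeasurableSet farSlab := hA₁.inter (measurableSet_le hφ₂ (hφ₁.const_mul 2))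
  have hdown : MeasurableSet {q : E × E | φ q.2 < φ q.1} := measurableSet_lt hφ₂ hφ₁
  have h_down : ρ (pairs ∩ {q | φ q.2 < φ q.1}) ≤ ρ lowSlab := by
    rw [← hswap.measure_preimage ((hA.prod hA).inter hdown).nullMeasurableSet]
    exact measure_mono fun q ⟨⟨hy, hx⟩, h⟩ => ⟨hx, h, hAφ _ hy⟩
  have h_up : ρ (pairs \ {q | φ q.2 < φ q.1}) ≤ ρ midSlab := by
    rw [← hrefl.measure_preimage ((hA.prod hA).diff hdown).nullMeasurableSet]
    refine measure_mono fun q ⟨⟨hx, hy⟩, h⟩ => ?_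
    have := hAφ _ hy
    simp only [reflectSnd, mem_ofPred_eq, not_lt, map_sub, map_add] at h this
    exact ⟨hx, by linarith, by linarith⟩
  have h_far : ρ (A ×ˢ halfspace) ≤ ρ farSlab := by
    rw [← hrefl.measure_preimage (hA.prod (measurableSet_le measurable_const hφ)).nullMeasurableSet]
    refine measure_mono fun q ⟨hx, hy⟩ => ?_
    simp only [reflectSnd, mem_ofPred_eq, map_sub, map_add] at hy
    exact ⟨hx, by linarith⟩
  calc ρ pairs + ρ (A ×ˢ halfspace)
      ≤ ρ (pairs ∩ {q | φ q.2 < φ q.1}) + ρ (pairs \ {q | φ q.2 < φ q.1}) + ρ (A ×ˢ halfspace) := by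
        gcongr; exact measure_le_inter_add_sdiff ρ _ _
    _ ≤ ρ lowSlab + ρ midSlab + ρ farSlab := by gcongr
    _ = ρ (lowSlab ∪ midSlab ∪ farSlab) := by
        rw [measure_union _ hfar, measure_union _ hmid]
        · exact disjoint_left.2 fun q ⟨_, h, _⟩ ⟨_, _, h'⟩ => by linarith
        · exact disjoint_left.2 fun q hq ⟨_, h'⟩ => by
            rcases hq with ⟨hx, h, _⟩ | ⟨hx, h, _⟩ <;> linarith [hAφ _ hx]
    _ ≤ ρ (A ×ˢ halfspaceᶜ) := by
        refine measure_mono fun q hq => ?_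
        rcases hq with (⟨hx, _, h⟩ | ⟨hx, _, h⟩) | ⟨hx, h⟩ <;>
          refine ⟨hx, ?_⟩ <;> simp only [halfspace, mem_compl_iff, mem_ofPred_eq, not_le] <;>
          linarith [hAφ _ hx]

theorem measure_prod_le_measure_prod_compl_diff {ρ : Measure (E × E)}
    (hswap : MeasurePreserving Prod.swap ρ ρ) (hrefl : MeasurePreserving reflectSnd ρ ρ)
    {φ : E →+ ℝ} (hφ : Measurable φ) {A : Set E} (hA : MeasurableSet A)
    (hAφ : ∀ x ∈ A, φ x < 0) (hAA : ρ (A ×ˢ A) ≠ ∞) :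
    ρ (A ×ˢ {y | 0 ≤ φ y}) ≤ ρ (A ×ˢ ({y | 0 ≤ φ y}ᶜ \ A)) := by
  have hA_compl : A ⊆ {y | 0 ≤ φ y}ᶜ := fun x hx => not_le.2 (hAφ x hx)
  refine ENNReal.le_of_add_le_add_left hAA ?_
  rw [← measure_union (disjoint_prod.2 (Or.inr disjoint_sdiff_right))
      (hA.prod ((measurableSet_le measurable_const hφ).compl.diff hA)),
    ← prod_union, union_sdiff_cancel hA_compl]
  exact measure_prod_self_add_measure_prod_le hswap hrefl hφ hA hAφ

end Reflection

section PairMeasure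

theorem MeasureTheory.MeasurePreserving.withDensity_of_comp_eq {α : Type*} [MeasurableSpace α]
    {μ : Measure α} {T : α → α} (hT : MeasurePreserving T μ μ) {f : α → ℝ≥0∞}
    (hf : Measurable f) (hfT : ∀ a, f (T a) = f a) :
    MeasurePreserving T (μ.withDensity f) (μ.withDensity f) := by
  refine ⟨hT.measurable, Measure.ext fun s hs => ?_⟩
  rw [Measure.map_apply hT.measurable hs, withDensity_apply _ hs,
    withDensity_apply _ (hT.measurable hs), ← hT.setLIntegral_comp_preimage hs hf]
  simp only [hfT]

variable {E : Type*} [NormedAddCommGroup E] [MeasurableSpace E] [BorelSpace E]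
  [SecondCountableTopology E] (μ : Measure E) {k : E → ℝ≥0∞}

noncomputable def pairMeasure (k : E → ℝ≥0∞) : Measure (E × E) :=
  (μ.prod μ).withDensity fun q => k (q.1 - q.2)

theorem pairMeasure_prod [SFinite μ] (hk : Measurable k) (X Y : Set E) :
    pairMeasure μ k (X ×ˢ Y) = ∫⁻ x in X, ∫⁻ y in Y, k (x - y) ∂μ ∂μ := by
  rw [pairMeasure, withDensity_apply', ← Measure.prod_restrict]
  exact lintegral_prod (fun q : E × E => k (q.1 - q.2)) (hk.comp measurable_sub).aemeasurable

theorem pairMeasure_prod_univ [SFinite μ] [μ.IsAddLeftInvariant] [μ.IsNegInvariant]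
    (hk : Measurable k) (X : Set E) : pairMeasure μ k (X ×ˢ univ) = μ X * ∫⁻ z, k z ∂μ := by
  simp only [pairMeasure_prod μ hk, Measure.restrict_univ,
    (μ.measurePreserving_sub_left _).lintegral_comp hk, setLIntegral_const, mul_comm]

theorem pairMeasure_restrict_sub_preimage {S : Set E} (hS : MeasurableSet S) :
    (pairMeasure μ k).restrict ((fun q : E × E => q.1 - q.2) ⁻¹' S) =
      pairMeasure μ (S.indicator k) := by
  rw [pairMeasure, pairMeasure, restrict_withDensity (measurable_sub hS),
    ← withDensity_indicator (measurable_sub hS)]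
  rfl

variable {μ}

theorem measurePreserving_swap_pairMeasure [SFinite μ] (hk : Measurable k)
    (hk_even : ∀ z, k (-z) = k z) :
    MeasurePreserving Prod.swap (pairMeasure μ k) (pairMeasure μ k) :=
  Measure.measurePreserving_swap.withDensity_of_comp_eq (hk.comp measurable_sub) fun q => by
    rw [Prod.fst_swap, Prod.snd_swap, ← neg_sub, hk_even]

theorem measurePreserving_reflectSnd_pairMeasure [SFinite μ] [μ.IsAddLeftInvariant]
    [μ.IsNegInvariant] (hk : Measurable k) (hk_even : ∀ z, k (-z) = k z) :
    MeasurePreserving reflectSnd (pairMeasure μ k) (pairMeasure μ k) :=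
  ((MeasurePreserving.id μ).skew_product (g := fun x y => x + x - y)
    ((measurable_fst.add measurable_fst).sub measurable_snd)
    (ae_of_all _ fun x => (μ.measurePreserving_sub_left (x + x)).map_eq)).withDensity_of_comp_eq
    (hk.comp measurable_sub) fun q => by
      show k (q.1 - (q.1 + q.1 - q.2)) = k (q.1 - q.2)
      rw [show q.1 - (q.1 + q.1 - q.2) = -(q.1 - q.2) by abel, hk_even]

end PairMeasure

section Halfspace

variable {E : Type*} [NormedAddCommGroup E] [MeasurableSpace E] [BorelSpace E]
  [SecondCountableTopology E] {μ : Measure E} [SFinite μ] [μ.IsAddLeftInvariant]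
  [μ.IsNegInvariant] {k : E → ℝ≥0∞}

theorem pairMeasure_prod_self_ne_top (hk : Measurable k) (hk_int : ∫⁻ z, k z ∂μ ≠ ∞)
    {A : Set E} (hA : μ A ≠ ∞) : pairMeasure μ k (A ×ˢ A) ≠ ∞ :=
  ne_top_of_le_ne_top (by rw [pairMeasure_prod_univ μ hk]; exact ENNReal.mul_ne_top hA hk_int)
    (measure_mono (prod_mono_right (subset_univ A)))

theorem pairMeasure_prod_halfspace_le (hk : Measurable k) (hk_even : ∀ z, k (-z) = k z)
    (hk_tail : ∀ r > 0, ∫⁻ z in {z | r ≤ ‖z‖}, k z ∂μ ≠ ∞) {φ : E →+ ℝ} (hφ : Measurable φ)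
    {A : Set E} (hA : MeasurableSet A) (hAμ : μ A ≠ ∞) (hAφ : ∀ x ∈ A, φ x < 0) :
    pairMeasure μ k (A ×ˢ {y | 0 ≤ φ y}) ≤ pairMeasure μ k (A ×ˢ ({y | 0 ≤ φ y}ᶜ \ A)) := by
  set H := {y | 0 ≤ φ y}
  set S : ℕ → Set E := fun m => {z | 1 / ((m : ℝ) + 1) ≤ ‖z‖}
  have hS : ∀ m, MeasurableSet (S m) := fun m => measurableSet_le measurable_const measurable_norm
  set D : ℕ → Set (E × E) := fun m => (fun q => q.1 - q.2) ⁻¹' S m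
  have hD : ∀ m q, q ∈ D m ↔ 1 / ((m : ℝ) + 1) ≤ ‖q.1 - q.2‖ := fun _ _ => Iff.rfl
  have hD_mono : Monotone D := fun i j hij q hq =>
    (hD j q).2 ((Nat.one_div_le_one_div hij).trans ((hD i q).1 hq))
  have hD_cover : A ×ˢ H ⊆ ⋃ m, D m := by
    rintro ⟨x, y⟩ ⟨hx, hy⟩
    have hxy : x ≠ y := by rintro rfl; exact (not_le.2 (hAφ x hx)) hy
    obtain ⟨m, hm⟩ := exists_nat_one_div_lt (norm_pos_iff.2 (sub_ne_zero.2 hxy))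
    exact mem_iUnion.2 ⟨m, (hD m _).2 hm.le⟩
  have h_trunc : ∀ m, pairMeasure μ k (A ×ˢ H ∩ D m) ≤ pairMeasure μ k (A ×ˢ (Hᶜ \ A)) := by
    intro m
    have hkm : Measurable ((S m).indicator k) := hk.indicator (hS m)
    have hkm_even : ∀ z, (S m).indicator k (-z) = (S m).indicator k z := fun z => by
      simp only [S, indicator_apply, mem_ofPred_eq, norm_neg, hk_even]
    have hkm_int : ∫⁻ z, (S m).indicator k z ∂μ ≠ ∞ := by
      rw [lintegral_indicator (hS m)]; exact hk_tail _ (by positivity)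
    rw [← Measure.restrict_apply' (measurable_sub (hS m)),
      pairMeasure_restrict_sub_preimage μ (hS m)]
    calc pairMeasure μ ((S m).indicator k) (A ×ˢ H)
        ≤ pairMeasure μ ((S m).indicator k) (A ×ˢ (Hᶜ \ A)) :=
          measure_prod_le_measure_prod_compl_diff
            (measurePreserving_swap_pairMeasure hkm hkm_even)
            (measurePreserving_reflectSnd_pairMeasure hkm hkm_even) hφ hA hAφ
            (pairMeasure_prod_self_ne_top hkm hkm_int hAμ)
      _ ≤ pairMeasure μ k (A ×ˢ (Hᶜ \ A)) := by
          rw [← pairMeasure_restrict_sub_preimage μ (hS m)]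
          exact Measure.restrict_apply_le _ _
  calc pairMeasure μ k (A ×ˢ H) = pairMeasure μ k (⋃ m, A ×ˢ H ∩ D m) := by
        rw [← inter_iUnion, inter_eq_left.2 hD_cover]
    _ = ⨆ m, pairMeasure μ k (A ×ˢ H ∩ D m) :=
        Monotone.measure_iUnion fun i j hij => inter_subset_inter_right _ (hD_mono hij)
    _ ≤ pairMeasure μ k (A ×ˢ (Hᶜ \ A)) := iSup_le h_trunc

end Halfspace

theorem setLIntegral_norm_ge_ne_top {E : Type*} [NormedAddCommGroup E] [MeasurableSpace E]
    [OpensMeasurableSpace E] {μ : Measure E} {K : E → ℝ}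
    (hK : ∫⁻ z, ENNReal.ofReal (min 1 ‖z‖ * K z) ∂μ ≠ ∞) {r : ℝ} (hr : 0 < r) :
    ∫⁻ z in {z | r ≤ ‖z‖}, ENNReal.ofReal (K z) ∂μ ≠ ∞ := by
  set c := ENNReal.ofReal (min 1 r)
  have hc : c ≠ 0 := (ENNReal.ofReal_pos.2 (lt_min one_pos hr)).ne'
  have h_bound : ∀ z ∈ {z : E | r ≤ ‖z‖},
      ENNReal.ofReal (K z) ≤ c⁻¹ * ENNReal.ofReal (min 1 ‖z‖ * K z) := fun z (hz : r ≤ ‖z‖) => by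
    rw [ENNReal.ofReal_mul (by positivity)]
    calc ENNReal.ofReal (K z) = c⁻¹ * (c * ENNReal.ofReal (K z)) :=
          (ENNReal.inv_mul_cancel_left hc ENNReal.ofReal_ne_top).symm
      _ ≤ c⁻¹ * (ENNReal.ofReal (min 1 ‖z‖) * ENNReal.ofReal (K z)) := by
          gcongr; exact ENNReal.ofReal_le_ofReal (min_le_min le_rfl hz)
  refine ne_top_of_le_ne_top (ENNReal.mul_ne_top (ENNReal.inv_ne_top.2 hc) hK) ?_
  calc ∫⁻ z in {z | r ≤ ‖z‖}, ENNReal.ofReal (K z) ∂μ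
      ≤ ∫⁻ z in {z | r ≤ ‖z‖}, c⁻¹ * ENNReal.ofReal (min 1 ‖z‖ * K z) ∂μ :=
        setLIntegral_mono' (measurableSet_le measurable_const measurable_norm) h_bound
    _ ≤ ∫⁻ z, c⁻¹ * ENNReal.ofReal (min 1 ‖z‖ * K z) ∂μ := setLIntegral_le_lintegral _ _
    _ = c⁻¹ * ∫⁻ z, ENNReal.ofReal (min 1 ‖z‖ * K z) ∂μ :=
        lintegral_const_mul' _ _ (ENNReal.inv_ne_top.2 hc)

section Perimeter

variable {n : ℕ} {K : Euc n → ℝ}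

theorem perK_eq_pairMeasure (hK : Measurable K) (G Ω : Set (Euc n)) :
    perK K G Ω = pairMeasure volume (fun z => ENNReal.ofReal (K z)) (G ×ˢ (Ω \ G)) +
      pairMeasure volume (fun z => ENNReal.ofReal (K z)) ((G ∩ Ω) ×ˢ (Ω ∪ G)ᶜ) := by
  have hk : Measurable fun z => ENNReal.ofReal (K z) := ENNReal.measurable_ofReal.comp hK
  rw [perK, pairMeasure_prod volume hk, pairMeasure_prod volume hk]

theorem perK_le_perK_union (hK : Measurable K) (hK_even : ∀ z, K (-z) = K z)
    {H A Ω : Set (Euc n)} (hH : MeasurableSet H) (hA : MeasurableSet A) (hΩ : MeasurableSet Ω)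
    (hAΩ : A ⊆ Ω) (hHA : Disjoint H A)
    (h : pairMeasure volume (fun z => ENNReal.ofReal (K z)) (A ×ˢ H) ≤
      pairMeasure volume (fun z => ENNReal.ofReal (K z)) (A ×ˢ (Hᶜ \ A))) :
    perK K H Ω ≤ perK K (H ∪ A) Ω := by
  have hk : Measurable fun z => ENNReal.ofReal (K z) := ENNReal.measurable_ofReal.comp hK
  set ρ := pairMeasure volume fun z => ENNReal.ofReal (K z)
  have h_comm : ρ (H ×ˢ A) = ρ (A ×ˢ H) := by
    rw [← preimage_swap_prod A H, (measurePreserving_swap_pairMeasure hk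
      fun z => by rw [hK_even]).measure_preimage (hA.prod hH).nullMeasurableSet]
  have hAH : ∀ x, x ∈ A → x ∉ H := fun x hxA hxH => disjoint_left.1 hHA hxH hxA
  have e₁ : Ω \ H = Ω \ (H ∪ A) ∪ A := by
    ext x; have := @hAΩ x; have := hAH x; simp only [Set.mem_sdiff, mem_union]; tauto
  have e₂ : (H ∪ A) ∩ Ω = H ∩ Ω ∪ A := by
    ext x; have := @hAΩ x; simp only [mem_inter_iff, mem_union]; tauto
  have e₃ : (Ω ∪ (H ∪ A))ᶜ = (Ω ∪ H)ᶜ := by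
    ext x; have := @hAΩ x; simp only [mem_compl_iff, mem_union]; tauto
  have e₄ : Hᶜ \ A = Ω \ (H ∪ A) ∪ (Ω ∪ H)ᶜ := by
    ext x; simp only [Set.mem_sdiff, mem_compl_iff, mem_union]; tauto
  have hΩF : Disjoint (Ω \ (H ∪ A)) A := disjoint_sdiff_left.mono_right subset_union_right
  have hΩF' : Disjoint (Ω \ (H ∪ A)) (Ω ∪ H)ᶜ :=
    disjoint_compl_right.mono_left (sdiff_subset.trans subset_union_left)
  rw [e₄, prod_union, measure_union (disjoint_prod.2 (Or.inr hΩF'))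
    (hA.prod (hΩ.union hH).compl)] at h
  rw [perK_eq_pairMeasure hK, perK_eq_pairMeasure hK, e₁, e₂, e₃, prod_union, union_prod,
    union_prod, measure_union (disjoint_prod.2 (Or.inr hΩF)) (hH.prod hA),
    measure_union (disjoint_prod.2 (Or.inl hHA)) (hA.prod (hΩ.diff (hH.union hA))),
    measure_union (disjoint_prod.2 (Or.inl (hHA.mono_left inter_subset_left)))
      (hA.prod (hΩ.union hH).compl), h_comm, add_right_comm, add_add_add_comm]
  gcongr

end Perimeter

theorem halfspace_outMin_general {n : ℕ} (K : Euc n → ℝ) (hK : KernelOK K)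
    (ν : Euc n) (R : ℝ) :
    OutMin K {x : Euc n | 0 ≤ ⟪x, ν⟫} (Metric.ball (0 : Euc n) R) := by
  obtain ⟨hK_meas, -, hK_even₀, hK_int⟩ := hK
  have hk : Measurable fun z => ENNReal.ofReal (K z) := ENNReal.measurable_ofReal.comp hK_meas
  have hK_even : ∀ z, K (-z) = K z := fun z =>
    (eq_or_ne z 0).elim (fun hz => by rw [hz, neg_zero]) (hK_even₀ z)
  let φ : Euc n →+ ℝ := (innerSL ℝ ν).toLinearMap.toAddMonoidHom
  have hφ : Measurable φ := (innerSL ℝ ν).continuous.measurable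
  have hH : {x : Euc n | 0 ≤ ⟪x, ν⟫} = {x | 0 ≤ φ x} := by
    ext x; simp [φ, real_inner_comm]
  have hH_meas : MeasurableSet {x | 0 ≤ φ x} := measurableSet_le measurable_const hφ
  intro F hF hHF hcpt
  rw [hH] at hHF hcpt ⊢
  rw [← union_sdiff_cancel hHF]
  refine perK_le_perK_union hK_meas hK_even hH_meas (hF.diff hH_meas) measurableSet_ball
    (subset_closure.trans hcpt.2) disjoint_sdiff_right ?_
  exact pairMeasure_prod_halfspace_le hk
    (fun z => by rw [hK_even]) (fun r hr => setLIntegral_norm_ge_ne_top hK_int.ne hr) hφ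
    (hF.diff hH_meas) ((measure_mono subset_closure).trans_lt hcpt.1.measure_lt_top).ne
    fun x hx => not_le.1 hx.2

/-- half-spaces are `K`-outward minimizing in every ball. -/
theorem halfspace_outMin {n : ℕ} (K : Euc n → ℝ) (hK : KernelOK K)
    (ν : Euc n) (hν : ‖ν‖ = 1) (R : ℝ) (hR : 0 < R) :
    OutMin K {x : Euc n | 0 ≤ ⟪x, ν⟫} (Metric.ball (0 : Euc n) R) :=
  halfspace_outMin_general K hK ν R
end

section
/- Every closed convex set C ⊆ ℝ^n is K-outward minimizing in every open ball B(0,R), R > 0: Per_K(C,B(0,R)) ≤ Per_K(F,B(0,R)) for every measurable F ⊇ C with F∖C compactly contained in B(0,R). -/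
open MeasureTheory Set Filter Metric Topology
open scoped ENNReal Pointwise

open MeasureTheory Set Filter Metric Topology
open scoped ENNReal

/-! Cutting a set `F ⊇ C` by a half-space `H = {c ≤ f}` that contains `C` does not increase the
`K`-perimeter in `Ω`, as long as `A = F \ H` is a subset of `Ω` of finite measure: the cut trades
the interaction of `F ∩ H` with `A` for the interaction of `A` with `Fᶜ`. For each fixed
translation vector `z` with `f z ≤ 0`, the points of `A` reached by `z` from `F ∩ H` are at most
as many (in measure) as the points of `A` that `z` moves out of `A`, since translation preserves
the measure of `A`; these leave towards `{f < c}`, hence land outside `F`. A closed convex set is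
the intersection of countably many half-spaces, so cutting `F` successively and passing to the
limit with Fatou's lemma gives `Per_K(C, Ω) ≤ Per_K(F, Ω)`. -/

section KernelInteraction

variable {G : Type*} [AddCommGroup G] [MeasurableSpace G]

noncomputable def kernelInteraction (μ : Measure G) (κ : G → ℝ≥0∞) (A B : Set G) : ℝ≥0∞ :=
  ∫⁻ x in A, ∫⁻ y in B, κ (x - y) ∂μ ∂μ

variable {μ : Measure G} {κ : G → ℝ≥0∞} {A A' B B' : Set G}

theorem kernelInteraction_union_left (hA' : MeasurableSet A') (h : Disjoint A A') :
    kernelInteraction μ κ (A ∪ A') B = kernelInteraction μ κ A B + kernelInteraction μ κ A' B :=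
  lintegral_union hA' h

theorem measure_sdiff_preimage_add_eq_sub [MeasurableAdd G] [μ.IsAddRightInvariant]
    (hA : MeasurableSet A) (hA_fin : μ A ≠ ∞) (z : G) :
    μ (A \ (· + z) ⁻¹' A) = μ (A \ (· - z) ⁻¹' A) := by
  have hpre : MeasurableSet ((· + z) ⁻¹' A) := measurable_add_const z hA
  rw [measure_sdiff_symm hA.nullMeasurableSet hpre.nullMeasurableSet
      (measure_preimage_add_right μ z A).symm (measure_ne_top_of_subset inter_subset_left hA_fin),
    ← measure_preimage_add_right μ z (A \ (· - z) ⁻¹' A)]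
  congr 1 with x
  simp

variable [MeasurableAdd₂ G] [MeasurableNeg G] [SFinite μ]

theorem kernelInteraction_union_right (hκ : Measurable κ) (hB' : MeasurableSet B')
    (h : Disjoint B B') :
    kernelInteraction μ κ A (B ∪ B') = kernelInteraction μ κ A B + kernelInteraction μ κ A B' := by
  simp only [kernelInteraction, lintegral_union hB' h]
  exact lintegral_add_left (hκ.comp measurable_sub).lintegral_prod_right' _

theorem kernelInteraction_eq_lintegral_indicator (hκ : Measurable κ) (hA : MeasurableSet A)
    (hB : MeasurableSet B) :
    kernelInteraction μ κ A B =
      ∫⁻ p, (A ×ˢ B).indicator (fun p => κ (p.1 - p.2)) p ∂μ.prod μ := by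
  rw [lintegral_indicator (hA.prod hB),
    setLIntegral_prod (fun p : G × G => κ (p.1 - p.2)) (hκ.comp measurable_sub).aemeasurable]
  rfl

theorem kernelInteraction_eq_lintegral_measure [μ.IsAddLeftInvariant] (hκ : Measurable κ)
    (hB : MeasurableSet B) :
    kernelInteraction μ κ A B = ∫⁻ z, κ (-z) * μ (A ∩ (· + z) ⁻¹' B) ∂μ := by
  have hshift : ∀ x, ∫⁻ y in B, κ (x - y) ∂μ = ∫⁻ z, κ (-z) * B.indicator 1 (x + z) ∂μ := by
    intro x
    rw [← lintegral_indicator hB, ← lintegral_add_left_eq_self _ x]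
    congr 1 with z
    by_cases hz : x + z ∈ B <;> simp [hz]
  have hmeas :
      Measurable (Function.uncurry fun x z => κ (-z) * B.indicator (1 : G → ℝ≥0∞) (x + z)) :=
    (hκ.comp measurable_snd.neg).mul ((measurable_const.indicator hB).comp measurable_add)
  simp_rw [kernelInteraction, hshift]
  rw [lintegral_lintegral_swap hmeas.aemeasurable]
  congr 1 with z
  have hpre : MeasurableSet ((· + z) ⁻¹' B) := measurable_add_const z hB
  have hind : ∀ x, B.indicator (1 : G → ℝ≥0∞) (x + z) = ((· + z) ⁻¹' B).indicator 1 x :=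
    fun x => rfl
  simp_rw [hind]
  rw [lintegral_const_mul _ (measurable_one.indicator hpre), lintegral_indicator_one hpre,
    Measure.restrict_apply hpre, inter_comm]

theorem kernelInteraction_le_compl_of_halfspace [μ.IsAddLeftInvariant] (hκ : Measurable κ)
    {𝓕 : Type*} [FunLike 𝓕 G ℝ] [AddMonoidHomClass 𝓕 G ℝ]
    (f : 𝓕) (c : ℝ) {A E : Set G} (hA : MeasurableSet A) (hE : MeasurableSet E)
    (hA_fin : μ A ≠ ∞) (hAf : ∀ x ∈ A, f x < c) (hEf : ∀ y ∈ E, c ≤ f y) :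
    kernelInteraction μ κ E A ≤ kernelInteraction μ κ A (E ∪ A)ᶜ := by
  rw [kernelInteraction_eq_lintegral_measure hκ hA,
    kernelInteraction_eq_lintegral_measure hκ (hE.union hA).compl]
  refine lintegral_mono fun z => mul_le_mul_right ?_ _
  rcases lt_or_ge 0 (f z) with hz | hz
  · have hempty : E ∩ (· + z) ⁻¹' A = ∅ := by
      refine eq_empty_of_forall_notMem fun y ⟨hyE, hyA⟩ => ?_
      have hyzA := hAf _ hyA
      rw [map_add] at hyzA
      linarith [hEf y hyE]
    simp [hempty]
  calc μ (E ∩ (· + z) ⁻¹' A)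
      = μ (A ∩ (· - z) ⁻¹' E) := by
        rw [← measure_preimage_add_right μ z (A ∩ _)]
        congr 1 with y
        simp [and_comm]
    _ ≤ μ (A \ (· - z) ⁻¹' A) :=
        measure_mono fun x ⟨hxA, hxE⟩ => ⟨hxA, fun h => (hAf _ h).not_ge (hEf _ hxE)⟩
    _ = μ (A \ (· + z) ⁻¹' A) := (measure_sdiff_preimage_add_eq_sub hA hA_fin z).symm
    _ = μ (A ∩ (· + z) ⁻¹' (E ∪ A)ᶜ) := by
        congr 1 with x
        refine and_congr_right fun hxA => ?_
        have : f (x + z) < c := by rw [map_add]; linarith [hAf x hxA]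
        simp only [mem_preimage, mem_compl_iff, mem_union, not_or]
        exact ⟨fun h => ⟨fun hE => (hEf _ hE).not_gt this, h⟩, fun h => h.2⟩

end KernelInteraction

theorem IsClosed.exists_seq_eq_iInter_halfspaces {E : Type*} [NormedAddCommGroup E]
    [NormedSpace ℝ E] [SecondCountableTopology E] {C : Set E} (hC : IsClosed C)
    (hC_conv : Convex ℝ C) :
    ∃ (f : ℕ → E →L[ℝ] ℝ) (c : ℕ → ℝ), C = ⋂ m, {x | c m ≤ f m x} := by
  set S : Set ((E →L[ℝ] ℝ) × ℝ) := {p | ∀ x ∈ C, p.2 ≤ p.1 x}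
  have hS_compl : ⋃ p ∈ S, {x | p.1 x < p.2} = Cᶜ := by
    ext x
    simp only [mem_iUnion, mem_ofPred_eq, mem_compl_iff, exists_prop]
    constructor
    · rintro ⟨p, hpS, hx⟩ hxC
      exact (hpS x hxC).not_gt hx
    · intro hx
      obtain ⟨f, u, hfx, hfC⟩ := geometric_hahn_banach_point_closed hC_conv hC hx
      exact ⟨(f, u), fun y hy => (hfC y hy).le, hfx⟩
  obtain ⟨T, hTS, hT_count, hT⟩ := TopologicalSpace.isOpen_biUnion_countable S
    (fun p : (E →L[ℝ] ℝ) × ℝ => {x | p.1 x < p.2})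
    fun p _ => isOpen_lt p.1.continuous continuous_const
  -- `(0, 0)` cuts out nothing; it only makes the index set nonempty.
  obtain ⟨g, hg⟩ := (hT_count.insert (0, 0)).exists_eq_range (insert_nonempty _ _)
  have hgS : ∀ m, g m ∈ S := by
    intro m
    have hm : g m ∈ insert (0, 0) T := hg ▸ mem_range_self m
    rcases hm with h | h
    · simp [S, h]
    · exact hTS h
  refine ⟨fun m => (g m).1, fun m => (g m).2, ?_⟩
  ext x
  simp only [mem_iInter, mem_ofPred_eq]
  refine ⟨fun hx m => hgS m x hx, fun hx => of_not_not fun hxC => ?_⟩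
  rw [← mem_compl_iff, ← hS_compl, ← hT] at hxC
  obtain ⟨p, hpT, hpx⟩ := mem_iUnion₂.1 hxC
  obtain ⟨m, rfl⟩ : p ∈ range g := hg ▸ mem_insert_of_mem _ hpT
  exact (hx m).not_gt hpx

section Perimeter

variable {n : ℕ} {K : Euc n → ℝ}

theorem perK_eq_kernelInteraction (E Ω : Set (Euc n)) :
    perK K E Ω = kernelInteraction volume (ENNReal.ofReal ∘ K) E (Ω \ E) +
      kernelInteraction volume (ENNReal.ofReal ∘ K) (E ∩ Ω) (Ω ∪ E)ᶜ :=
  rfl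

theorem perK_le_perK_union_of_kernelInteraction_le (hK : Measurable K) {E A Ω : Set (Euc n)}
    (hE : MeasurableSet E) (hA : MeasurableSet A) (hΩ : MeasurableSet Ω) (hAΩ : A ⊆ Ω)
    (hEA : Disjoint E A)
    (h : kernelInteraction volume (ENNReal.ofReal ∘ K) E A ≤
      kernelInteraction volume (ENNReal.ofReal ∘ K) A (E ∪ A)ᶜ) :
    perK K E Ω ≤ perK K (E ∪ A) Ω := by
  set L := kernelInteraction volume (ENNReal.ofReal ∘ K)
  have hκ : Measurable (ENNReal.ofReal ∘ K) := ENNReal.measurable_ofReal.comp hK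
  have hOA : Disjoint (Ω \ (E ∪ A)) A := disjoint_sdiff_left.mono_right subset_union_right
  have hOX : Disjoint (Ω \ (E ∪ A)) (Ω ∪ E)ᶜ :=
    disjoint_compl_right.mono_left (sdiff_subset.trans subset_union_left)
  have hdiff : Ω \ E = Ω \ (E ∪ A) ∪ A := by
    ext x; have := @hAΩ x; have := hEA.notMem_of_mem_right (a := x); simp; tauto
  have hinter : (E ∪ A) ∩ Ω = E ∩ Ω ∪ A := by
    ext x; have := @hAΩ x; simp; tauto
  have hout : (Ω ∪ (E ∪ A))ᶜ = (Ω ∪ E)ᶜ := by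
    ext x; have := @hAΩ x; simp; tauto
  have hcompl : (E ∪ A)ᶜ = Ω \ (E ∪ A) ∪ (Ω ∪ E)ᶜ := by
    ext x; simp; tauto
  calc perK K E Ω = L E (Ω \ (E ∪ A)) + L E A + L (E ∩ Ω) (Ω ∪ E)ᶜ := by
        rw [perK_eq_kernelInteraction, hdiff, kernelInteraction_union_right hκ hA hOA]
    _ ≤ L E (Ω \ (E ∪ A)) + L A (E ∪ A)ᶜ + L (E ∩ Ω) (Ω ∪ E)ᶜ := by gcongr
    _ = perK K (E ∪ A) Ω := by
        simp only [L]
        rw [perK_eq_kernelInteraction, hinter, hout, hcompl,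
          kernelInteraction_union_left hA hEA, kernelInteraction_union_left hA
            (hEA.mono_left inter_subset_left),
          kernelInteraction_union_right hκ (hΩ.union hE).compl hOX]
        ring

theorem perK_inter_halfspace_le (hK : Measurable K) {F Ω : Set (Euc n)} (hF : MeasurableSet F)
    (hΩ : MeasurableSet Ω) (f : Euc n →L[ℝ] ℝ) (c : ℝ) (hAΩ : F ∩ {x | f x < c} ⊆ Ω)
    (hA_fin : volume (F ∩ {x | f x < c}) ≠ ∞) :
    perK K (F ∩ {x | c ≤ f x}) Ω ≤ perK K F Ω := by
  have hE : MeasurableSet (F ∩ {x | c ≤ f x}) :=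
    hF.inter (measurableSet_le measurable_const f.measurable)
  have hA : MeasurableSet (F ∩ {x | f x < c}) :=
    hF.inter (measurableSet_lt f.measurable measurable_const)
  have hsplit : F = F ∩ {x | c ≤ f x} ∪ F ∩ {x | f x < c} := by
    rw [← inter_union_distrib_left]
    ext x
    simp [le_or_gt]
  have hdisj : Disjoint (F ∩ {x | c ≤ f x}) (F ∩ {x | f x < c}) :=
    disjoint_left.2 fun x hx hx' => not_le.2 (show f x < c from hx'.2) (show c ≤ f x from hx.2)
  conv_rhs => rw [hsplit]
  exact perK_le_perK_union_of_kernelInteraction_le hK hE hA hΩ hAΩ hdisj <|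
    kernelInteraction_le_compl_of_halfspace (ENNReal.measurable_ofReal.comp hK) f c hA hE hA_fin
      (fun x hx => hx.2) fun y hy => hy.2

theorem perK_le_liminf (hK : Measurable K) {Ω : Set (Euc n)} (hΩ : MeasurableSet Ω) {ι : Type*}
    {l : Filter ι} [l.IsCountablyGenerated] {F : ι → Set (Euc n)} {E : Set (Euc n)}
    (hF : ∀ i, MeasurableSet (F i)) (hE : MeasurableSet E)
    (hFE : ∀ x, ∀ᶠ i in l, (x ∈ F i ↔ x ∈ E)) :
    perK K E Ω ≤ liminf (fun i => perK K (F i) Ω) l := by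
  set g : Euc n × Euc n → ℝ≥0∞ := fun p => ENNReal.ofReal (K (p.1 - p.2))
  have hg : Measurable g := ENNReal.measurable_ofReal.comp (hK.comp measurable_sub)
  set Φ : Set (Euc n) → Euc n × Euc n → ℝ≥0∞ := fun S p =>
    (S ×ˢ (Ω \ S)).indicator g p + ((S ∩ Ω) ×ˢ (Ω ∪ S)ᶜ).indicator g p
  have hperK : ∀ S, MeasurableSet S → perK K S Ω = ∫⁻ p, Φ S p ∂volume.prod volume := by
    intro S hS
    have hκ : Measurable (ENNReal.ofReal ∘ K) := ENNReal.measurable_ofReal.comp hK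
    rw [perK_eq_kernelInteraction, kernelInteraction_eq_lintegral_indicator hκ hS (hΩ.diff hS),
      kernelInteraction_eq_lintegral_indicator hκ (hS.inter hΩ) (hΩ.union hS).compl]
    exact (lintegral_add_left (hg.indicator (hS.prod (hΩ.diff hS))) _).symm
  have hΦ : ∀ p, Φ E p ≤ liminf (fun i => Φ (F i) p) l := by
    intro p
    refine le_liminf_of_le (by isBoundedDefault) ?_
    filter_upwards [hFE p.1, hFE p.2] with i h₁ h₂
    classical
    simp only [Φ, indicator_apply, mem_prod, Set.mem_sdiff, mem_inter_iff, mem_union, mem_compl_iff,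
      h₁, h₂, le_refl]
  calc perK K E Ω = ∫⁻ p, Φ E p ∂volume.prod volume := hperK E hE
    _ ≤ ∫⁻ p, liminf (fun i => Φ (F i) p) l ∂volume.prod volume := lintegral_mono hΦ
    _ ≤ liminf (fun i => ∫⁻ p, Φ (F i) p ∂volume.prod volume) l :=
        lintegral_liminf_le fun i => (hg.indicator ((hF i).prod (hΩ.diff (hF i)))).add
          (hg.indicator (((hF i).inter hΩ).prod (hΩ.union (hF i)).compl))
    _ = liminf (fun i => perK K (F i) Ω) l := by simp only [hperK _ (hF _)]

theorem perK_le_of_eq_iInter_halfspaces (hK : Measurable K) {Ω C F : Set (Euc n)}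
    (hΩ : MeasurableSet Ω) (f : ℕ → Euc n →L[ℝ] ℝ) (c : ℕ → ℝ)
    (hC : C = ⋂ m, {x | c m ≤ f m x}) (hF : MeasurableSet F) (hCF : C ⊆ F)
    (hFC_Ω : F \ C ⊆ Ω) (hFC_fin : volume (F \ C) ≠ ∞) :
    perK K C Ω ≤ perK K F Ω := by
  set cut : ℕ → Set (Euc n) := fun m => F ∩ ⋂ i < m, {x | c i ≤ f i x}
  have hhalf : ∀ i, MeasurableSet {x | c i ≤ f i x} := fun i =>
    measurableSet_le measurable_const (f i).measurable
  have hcut : ∀ m, MeasurableSet (cut m) := fun m =>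
    hF.inter (.iInter fun i => .iInter fun _ => hhalf i)
  have hcut_succ : ∀ m, cut (m + 1) = cut m ∩ {x | c m ≤ f m x} := fun m => by
    simp only [cut, biInter_lt_succ, inter_assoc]
  have hcut_le : ∀ m, perK K (cut m) Ω ≤ perK K F Ω := by
    intro m
    induction m with
    | zero => simp [cut]
    | succ m ih =>
      have hA : cut m ∩ {x | f m x < c m} ⊆ F \ C := by
        rintro x ⟨⟨hxF, -⟩, hx⟩
        refine ⟨hxF, fun hxC => ?_⟩
        rw [hC, mem_iInter] at hxC
        exact not_le.2 (show f m x < c m from hx) (hxC m)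
      rw [hcut_succ]
      exact (perK_inter_halfspace_le hK (hcut m) hΩ (f m) (c m) (hA.trans hFC_Ω)
        (measure_ne_top_of_subset hA hFC_fin)).trans ih
  have hlim : ∀ x, ∀ᶠ m in atTop, (x ∈ cut m ↔ x ∈ C) := by
    intro x
    by_cases hx : x ∈ C
    · have hx' := hx
      rw [hC, mem_iInter] at hx'
      exact .of_forall fun m => iff_of_true ⟨hCF hx, mem_iInter₂.2 fun i _ => hx' i⟩ hx
    · obtain ⟨i, hi⟩ : ∃ i, ¬ c i ≤ f i x := by simpa [hC] using hx
      filter_upwards [eventually_gt_atTop i] with m hm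
      exact iff_of_false (fun hxm => hi (mem_iInter₂.1 hxm.2 i hm)) hx
  calc perK K C Ω ≤ liminf (fun m => perK K (cut m) Ω) atTop :=
        perK_le_liminf hK hΩ hcut (hC ▸ .iInter hhalf) hlim
    _ ≤ perK K F Ω := (liminf_le_liminf (.of_forall hcut_le)).trans_eq (liminf_const _)

end Perimeter

theorem convex_outMin_general {n : ℕ} (K : Euc n → ℝ) (hK : KernelOK K)
    (C : Set (Euc n)) (hCcl : IsClosed C) (hCconv : Convex ℝ C)
    (R : ℝ) :
    OutMin K C (Metric.ball (0 : Euc n) R) := by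
  intro F hF hCF hFC
  obtain ⟨f, c, hC⟩ := hCcl.exists_seq_eq_iInter_halfspaces hCconv
  exact perK_le_of_eq_iInter_halfspaces hK.1 measurableSet_ball f c hC hF hCF
    (subset_closure.trans hFC.2) (measure_ne_top_of_subset subset_closure hFC.1.measure_lt_top.ne)

/-- closed convex sets are `K`-outward minimizing in every ball. -/
theorem convex_outMin {n : ℕ} (K : Euc n → ℝ) (hK : KernelOK K)
    (C : Set (Euc n)) (hCcl : IsClosed C) (hCconv : Convex ℝ C)
    (R : ℝ) (hR : 0 < R) :
    OutMin K C (Metric.ball (0 : Euc n) R) :=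
  convex_outMin_general K hK C hCcl hCconv R
end

section
/- Let C ⊆ ℝ^n be a closed convex set with diameter at most R, and let x ∈ ∂C. Then for every ε ∈ (0,R), ∫_{ℝ^n∖B(x,ε)} (χ_{ℝ^n∖C}(y) − χ_C(y)) K(x−y) dy ≥ ∫_{ℝ^n∖B(0,R)} K(z) dz; in particular the truncated K-curvature of C at x is bounded below by ∫_{ℝ^n∖B(0,R)} K(z) dz, uniformly in ε. -/
open MeasureTheory Set Filter Metric Topology
open scoped ENNReal Pointwise

open MeasureTheory Set Filter Metric Topology
open scoped ENNReal

set_option maxHeartbeats 1000000 in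
/-- uniform lower bound on the truncated `K`-curvature of a bounded closed
convex set of diameter at most `R`. -/
theorem convex_truncCurv_lowerBound {n : ℕ} (K : Euc n → ℝ) (hK : KernelOK K)
    (C : Set (Euc n)) (R : ℝ) (hCcl : IsClosed C) (hCconv : Convex ℝ C)
    (hdiam : EMetric.diam C ≤ ENNReal.ofReal R)
    (x : Euc n) (hx : x ∈ frontier C) (ε : ℝ) (hε : 0 < ε) (hεR : ε < R) :
    (∫ z in (Metric.ball (0 : Euc n) R)ᶜ, K z) ≤
      ∫ y in (Metric.ball x ε)ᶜ,
        ((Cᶜ).indicator (fun _ => (1:ℝ)) y - C.indicator (fun _ => (1:ℝ)) y) * K (x - y) := by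
  classical
  obtain ⟨hKm, hKpos, hKeven, hKint⟩ := hK
  have hR0 : (0:ℝ) < R := hε.trans hεR
  have hxC : x ∈ C := hCcl.closure_eq ▸ (frontier_subset_closure hx)
  have hCm : MeasurableSet C := hCcl.measurableSet
  -- integrability of K outside balls
  have hint : ∀ r : ℝ, 0 < r → IntegrableOn K (Metric.ball (0:Euc n) r)ᶜ := by
    intro r hr
    have hc : (0:ℝ) < min 1 r := lt_min one_pos hr
    refine ⟨hKm.aestronglyMeasurable.restrict, ?_⟩
    rw [hasFiniteIntegral_iff_norm]
    have hmeas : Measurable fun z : Euc n =>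
        ENNReal.ofReal ((min 1 r)⁻¹ * (min 1 ‖z‖ * K z)) :=
      (measurable_const.mul ((measurable_const.min measurable_norm).mul hKm)).ennreal_ofReal
    calc ∫⁻ z in (Metric.ball (0:Euc n) r)ᶜ, ENNReal.ofReal ‖K z‖
        ≤ ∫⁻ z in (Metric.ball (0:Euc n) r)ᶜ,
            ENNReal.ofReal ((min 1 r)⁻¹ * (min 1 ‖z‖ * K z)) := by
          refine setLIntegral_mono hmeas fun z hz => ?_
          have hzr : r ≤ ‖z‖ := by
            simpa [Metric.mem_ball, dist_zero_right, not_lt] using hz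
          have hz0 : z ≠ 0 := by
            intro h; rw [h] at hzr; simp at hzr; linarith
          have hK0 : 0 ≤ K z := hKpos z hz0
          rw [Real.norm_of_nonneg hK0]
          apply ENNReal.ofReal_le_ofReal
          rw [le_inv_mul_iff₀ hc]
          exact mul_le_mul_of_nonneg_right (min_le_min le_rfl hzr) hK0
      _ ≤ ∫⁻ z : Euc n, ENNReal.ofReal ((min 1 r)⁻¹ * (min 1 ‖z‖ * K z)) :=
          setLIntegral_le_lintegral _ _
      _ = ∫⁻ z : Euc n, ENNReal.ofReal ((min 1 r)⁻¹) * ENNReal.ofReal (min 1 ‖z‖ * K z) := by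
          congr 1; ext z; rw [ENNReal.ofReal_mul (by positivity)]
      _ = ENNReal.ofReal ((min 1 r)⁻¹) * ∫⁻ z : Euc n, ENNReal.ofReal (min 1 ‖z‖ * K z) :=
          lintegral_const_mul _ ((measurable_const.min measurable_norm).mul hKm).ennreal_ofReal
      _ < ⊤ := ENNReal.mul_lt_top ENNReal.ofReal_lt_top hKint
  have hKR : IntegrableOn K (Metric.ball (0:Euc n) R)ᶜ := hint R hR0
  have hKε : IntegrableOn K (Metric.ball (0:Euc n) ε)ᶜ := hint ε hε
  -- the pulled-back integrand
  set g : Euc n → ℝ := fun z =>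
    ((Cᶜ).indicator (fun _ => (1:ℝ)) (x - z) - C.indicator (fun _ => (1:ℝ)) (x - z)) * K z
    with hgdef
  have hgm : Measurable g := by
    refine Measurable.mul (Measurable.sub ?_ ?_) hKm
    · exact (measurable_const.indicator hCm.compl).comp (measurable_const.sub measurable_id)
    · exact (measurable_const.indicator hCm).comp (measurable_const.sub measurable_id)
  have hgabs : ∀ z, ‖g z‖ ≤ ‖K z‖ := by
    intro z
    rw [hgdef]
    simp only
    rw [norm_mul]
    have h1 : ‖(Cᶜ).indicator (fun _ => (1:ℝ)) (x - z) -
        C.indicator (fun _ => (1:ℝ)) (x - z)‖ ≤ 1 := by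
      by_cases h : x - z ∈ C <;>
        simp [Set.indicator_of_mem, Set.indicator_of_notMem, h]
    calc ‖(Cᶜ).indicator (fun _ => (1:ℝ)) (x - z) -
          C.indicator (fun _ => (1:ℝ)) (x - z)‖ * ‖K z‖ ≤ 1 * ‖K z‖ :=
        mul_le_mul_of_nonneg_right h1 (norm_nonneg _)
      _ = ‖K z‖ := one_mul _
  have hgint : ∀ s : Set (Euc n), IntegrableOn K s → IntegrableOn g s := fun s hs =>
    Integrable.mono hs hgm.aestronglyMeasurable.restrict (ae_of_all _ hgabs)
  -- change of variables z = x - y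
  have hmp : MeasurePreserving (fun y : Euc n => x - y) volume volume :=
    Measure.measurePreserving_sub_left volume x
  have hemb : MeasurableEmbedding (fun y : Euc n => x - y) :=
    (MeasurableEquiv.subLeft x).measurableEmbedding
  have hpre : (fun y : Euc n => x - y) ⁻¹' (Metric.ball (0:Euc n) ε)ᶜ
      = (Metric.ball x ε)ᶜ := by
    ext y
    simp [Metric.mem_ball, dist_zero_right, dist_eq_norm, norm_sub_rev x y]
  have hcov : (∫ y in (Metric.ball x ε)ᶜ,
      ((Cᶜ).indicator (fun _ => (1:ℝ)) y - C.indicator (fun _ => (1:ℝ)) y) * K (x - y))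
      = ∫ z in (Metric.ball (0:Euc n) ε)ᶜ, g z := by
    rw [← hmp.setIntegral_preimage_emb hemb g ((Metric.ball (0:Euc n) ε)ᶜ), hpre]
    refine setIntegral_congr_fun measurableSet_ball.compl fun y _ => ?_
    simp [hgdef, sub_sub_cancel]
  -- split the domain
  set A : Set (Euc n) := Metric.ball (0:Euc n) R \ Metric.ball (0:Euc n) ε with hAdef
  have hAmeas : MeasurableSet A := measurableSet_ball.diff measurableSet_ball
  have hAsub : A ⊆ (Metric.ball (0:Euc n) ε)ᶜ := fun z hz => hz.2
  have hAz0 : ∀ z ∈ A, z ≠ 0 := by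
    intro z hz h0
    have : z ∉ Metric.ball (0:Euc n) ε := hz.2
    exact this (by simp [h0, Metric.mem_ball, hε])
  have hsplit : (Metric.ball (0:Euc n) ε)ᶜ = (Metric.ball (0:Euc n) R)ᶜ ∪ A := by
    ext z
    simp only [Set.mem_compl_iff, Set.mem_union, hAdef, Set.mem_diff, Metric.mem_ball,
      dist_zero_right]
    constructor
    · intro h
      by_cases hb : ‖z‖ < R
      · exact Or.inr ⟨hb, h⟩
      · exact Or.inl hb
    · rintro (h | ⟨_, h⟩) hlt
      · exact h (hlt.trans hεR)
      · exact h hlt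
  have hdisj : Disjoint ((Metric.ball (0:Euc n) R)ᶜ) A :=
    disjoint_compl_left.mono_right Set.diff_subset
  have hgR : IntegrableOn g (Metric.ball (0:Euc n) R)ᶜ := hgint _ hKR
  have hgA : IntegrableOn g A := (hgint _ hKε).mono_set hAsub
  -- on the complement of the big ball, g = K a.e.
  have hsph : ∀ᵐ z : Euc n, z ∉ Metric.sphere (0:Euc n) R :=
    measure_eq_zero_iff_ae_notMem.mp
      (Measure.addHaar_sphere_of_ne_zero volume (0:Euc n) (ne_of_gt hR0))
  have hstep1 : ∫ z in (Metric.ball (0:Euc n) R)ᶜ, g z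
      = ∫ z in (Metric.ball (0:Euc n) R)ᶜ, K z := by
    refine setIntegral_congr_ae measurableSet_ball.compl ?_
    filter_upwards [hsph] with z hz hz2
    have hzR : R < ‖z‖ := by
      have h1 : R ≤ ‖z‖ := by
        simpa [Metric.mem_ball, dist_zero_right, not_lt] using hz2
      rcases lt_or_eq_of_le h1 with h | h
      · exact h
      · exact absurd (by simp [Metric.mem_sphere, dist_zero_right, h.symm]) hz
    have hnc : x - z ∉ C := by
      intro hmem
      have h2 : edist x (x - z) ≤ EMetric.diam C := EMetric.edist_le_diam_of_mem hxC hmem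
      have h3 : edist x (x - z) = ENNReal.ofReal ‖z‖ := by
        rw [edist_dist, dist_eq_norm, sub_sub_cancel]
      rw [h3] at h2
      have h4 := (ENNReal.ofReal_le_ofReal_iff hR0.le).mp (h2.trans hdiam)
      linarith
    simp [hgdef, Set.indicator_of_mem, Set.indicator_of_notMem, hnc]
  -- on the annulus, the integral of g is nonnegative
  have hstep2 : 0 ≤ ∫ z in A, g z := by
    rcases Set.eq_empty_or_nonempty (interior C) with hintC | ⟨w, hw⟩
    · -- degenerate case: C has measure zero
      have hCnull : volume C = 0 := by
        have hfr := hCconv.addHaar_frontier (volume : Measure (Euc n))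
        rwa [hCcl.frontier_eq, hintC, Set.diff_empty] at hfr
      have hprenull : volume ((fun z : Euc n => x - z) ⁻¹' C) = 0 := by
        rw [hmp.measure_preimage hCm.nullMeasurableSet]; exact hCnull
      refine setIntegral_nonneg_ae hAmeas ?_
      filter_upwards [measure_eq_zero_iff_ae_notMem.mp hprenull] with z hz hzA
      have hz0 : z ≠ 0 := hAz0 z hzA
      have hnc : x - z ∉ C := hz
      simp only [hgdef, Set.indicator_of_mem, Set.indicator_of_notMem, hnc,
        Set.mem_compl_iff, not_false_iff]
      simp [hnc]
      exact hKpos z hz0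
    · -- nondegenerate case: supporting hyperplane at x
      obtain ⟨f, hf⟩ := geometric_hahn_banach_open_point hCconv.interior isOpen_interior
        (fun h => hx.2 h)
      have hsupp : ∀ y ∈ C, f y ≤ f x := by
        intro y hy
        by_contra hcon
        push_neg at hcon
        have hlim : Tendsto (fun t : ℝ => (1 - t) * f w + t * f y) (𝓝[<] (1:ℝ))
            (𝓝 (f y)) := by
          have h0 : Tendsto (fun t : ℝ => (1 - t) * f w + t * f y) (𝓝 (1:ℝ))
              (𝓝 ((1 - 1) * f w + 1 * f y)) :=
            (((continuous_const.sub continuous_id).mul continuous_const).add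
              (continuous_id.mul continuous_const)).tendsto 1
          simp only [sub_self, zero_mul, one_mul, zero_add] at h0
          exact h0.mono_left nhdsWithin_le_nhds
        have hev : ∀ᶠ t in 𝓝[<] (1:ℝ), f x < (1 - t) * f w + t * f y :=
          hlim.eventually (eventually_gt_nhds hcon)
        have hev2 : ∀ᶠ t in 𝓝[<] (1:ℝ), t ∈ Set.Ioo (0:ℝ) 1 :=
          Ioo_mem_nhdsLT_of_mem ⟨zero_lt_one, le_rfl⟩
        obtain ⟨t, ht1, ht2⟩ := (hev.and hev2).exists
        have hmem : (1 - t) • w + t • y ∈ interior C :=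
          hCconv.combo_interior_closure_mem_interior hw
            (by rw [hCcl.closure_eq]; exact hy) (by linarith [ht2.2]) ht2.1.le
            (by ring)
        have := hf _ hmem
        rw [map_add, f.map_smul, f.map_smul, smul_eq_mul, smul_eq_mul] at this
        linarith
      -- kernel of f is null
      have hwx : f w < f x := hf w hw
      have hker : volume {z : Euc n | f z = 0} = 0 := by
        have h1 : ({z : Euc n | f z = 0} : Set (Euc n)) =
            (LinearMap.ker (f : Euc n →ₗ[ℝ] ℝ) : Set (Euc n)) := rfl
        rw [h1]
        refine Measure.addHaar_submodule volume _ ?_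
        intro htop
        have : x - w ∈ LinearMap.ker (f : Euc n →ₗ[ℝ] ℝ) := htop ▸ Submodule.mem_top
        rw [LinearMap.mem_ker] at this
        have h2 : f (x - w) = f x - f w := map_sub f x w
        rw [show ((f : Euc n →ₗ[ℝ] ℝ) (x - w)) = f (x - w) from rfl] at this
        rw [this] at h2
        linarith
      -- comparison function
      set h : Euc n → ℝ := fun z => (if 0 ≤ f z then (-1:ℝ) else 1) * K z with hhdef
      have hhm : Measurable h := by
        refine Measurable.mul ?_ hKm
        exact Measurable.ite (measurableSet_le measurable_const f.continuous.measurable)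
          measurable_const measurable_const
      have hhabs : ∀ z, ‖h z‖ ≤ ‖K z‖ := by
        intro z
        rw [hhdef]
        simp only
        rw [norm_mul]
        by_cases hp : 0 ≤ f z <;> simp [hp]
      have hhA : IntegrableOn h A :=
        Integrable.mono (hKε.mono_set hAsub) hhm.aestronglyMeasurable.restrict
          (ae_of_all _ hhabs)
      -- h ≤ g on A
      have hle : ∀ z ∈ A, h z ≤ g z := by
        intro z hz
        have hz0 : z ≠ 0 := hAz0 z hz
        have hK0 : 0 ≤ K z := hKpos z hz0
        by_cases hmem : x - z ∈ C
        · have hfz : 0 ≤ f z := by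
            have := hsupp _ hmem
            have h2 : f (x - z) = f x - f z := map_sub f x z
            linarith [h2 ▸ this]
          simp only [hgdef, hhdef, Set.indicator_of_mem, Set.indicator_of_notMem,
            hmem, Set.mem_compl_iff, not_not]
          simp [hmem, hfz]
        · simp only [hgdef, hhdef]
          simp [hmem]
          by_cases hp : 0 ≤ f z <;> simp [hp] <;> linarith
      -- integral of h over A vanishes by symmetry
      have hmpn : MeasurePreserving (fun z : Euc n => -z) volume volume :=
        Measure.measurePreserving_neg volume
      have hembn : MeasurableEmbedding (fun z : Euc n => -z) :=
        (MeasurableEquiv.neg (Euc n)).measurableEmbedding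
      have hAneg : (fun z : Euc n => -z) ⁻¹' A = A := by
        ext z
        simp [hAdef, Metric.mem_ball, dist_zero_right]
      have hsym : ∫ z in A, h z = ∫ z in A, h (-z) := by
        conv_lhs => rw [← hmpn.setIntegral_preimage_emb hembn h A, hAneg]
      have hneg : ∫ z in A, h (-z) = ∫ z in A, (-(h z)) := by
        refine setIntegral_congr_ae hAmeas ?_
        filter_upwards [measure_eq_zero_iff_ae_notMem.mp hker] with z hz hzA
        have hz0 : z ≠ 0 := hAz0 z hzA
        have hfz : f z ≠ 0 := hz
        have hKe : K (-z) = K z := hKeven z hz0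
        by_cases hp : 0 ≤ f z
        · have hp' : ¬ (0 ≤ f (-z)) := by
            rw [map_neg]
            have h' : 0 < f z := lt_of_le_of_ne hp (Ne.symm hfz)
            linarith
          show (if 0 ≤ f (-z) then (-1:ℝ) else 1) * K (-z)
              = -((if 0 ≤ f z then (-1:ℝ) else 1) * K z)
          rw [if_neg hp', if_pos hp, hKe]; ring
        · have hp' : 0 ≤ f (-z) := by
            rw [map_neg]; push_neg at hp; linarith
          show (if 0 ≤ f (-z) then (-1:ℝ) else 1) * K (-z)
              = -((if 0 ≤ f z then (-1:ℝ) else 1) * K z)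
          rw [if_pos hp', if_neg hp, hKe]; ring
      have hzero : ∫ z in A, h z = 0 := by
        have := hsym.trans hneg
        rw [integral_neg] at this
        linarith
      calc (0:ℝ) = ∫ z in A, h z := hzero.symm
        _ ≤ ∫ z in A, g z := setIntegral_mono_on hhA hgA hAmeas hle
  -- put everything together
  rw [hcov, hsplit, setIntegral_union hdisj hAmeas hgR hgA, hstep1]
  linarith
end
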